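/- arXiv:1711.11304 — 16 statements merged into one kernel-verified Lean document; each statement's English description precedes it below -/
import Mathlib

section
/- For every preference factor α ∈ [0,1], the daily-proportional game is a weighted potential game with weights E_n/E and potential W^DP_α(ℓ) = (1−α) Σ_h C_h(ℓ^h) + α Σ_n (E/E_n) ω_n Σ_h (ℓ_n^h − ℓ̂_n^h)². Precisely, for every profile ℓ ∈ (ℝ^H)^N, every consumer n, and every unilateral deviation x_n ∈ ℝ^H, one has f_n^α(x_n, ℓ_{−n}) − f_n^α(ℓ_n, ℓ_{−n}) = (E_n/E) · ( W^DP_α(x_n, ℓ_{−n}) − W^DP_α(ℓ) ). -/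
/-- The daily-proportional game is a weighted potential game with
weights `E_n / E` and potential `W^DP_α`. -/
theorem dp_weighted_potential
    (N H : ℕ)
    (En : Fin N → ℝ) (hEn : ∀ n, 0 < En n)
    (ω : Fin N → ℝ) (hω : ∀ n, 0 < ω n)
    (lhat : Fin N → Fin H → ℝ)
    (C : Fin H → ℝ → ℝ)
    (α : ℝ) (hα : α ∈ Set.Icc (0 : ℝ) 1)
    (E : ℝ) (hE : E = ∑ n, En n)
    (f : Fin N → (Fin N → Fin H → ℝ) → ℝ)
    (hf : ∀ n ℓ, f n ℓ =
      (1 - α) * ((En n / E) * ∑ h, C h (∑ m, ℓ m h))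
        + α * (ω n * ∑ h, (ℓ n h - lhat n h) ^ 2))
    (W : (Fin N → Fin H → ℝ) → ℝ)
    (hW : ∀ ℓ, W ℓ =
      (1 - α) * ∑ h, C h (∑ m, ℓ m h)
        + α * ∑ n, (E / En n) * ω n * ∑ h, (ℓ n h - lhat n h) ^ 2) :
    ∀ (ℓ : Fin N → Fin H → ℝ) (n : Fin N) (x : Fin H → ℝ),
      f n (Function.update ℓ n x) - f n ℓ
        = (En n / E) * (W (Function.update ℓ n x) - W ℓ) := by
  intro ℓ n x
  have hEpos : 0 < E := by
    rw [hE]; exact Finset.sum_pos (fun i _ => hEn i) ⟨n, Finset.mem_univ n⟩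
  have hEne : E ≠ 0 := ne_of_gt hEpos
  have hEnne : En n ≠ 0 := ne_of_gt (hEn n)
  have key : (∑ m, (E / En m) * ω m * ∑ h, (Function.update ℓ n x m h - lhat m h) ^ 2)
      - ∑ m, (E / En m) * ω m * ∑ h, (ℓ m h - lhat m h) ^ 2
      = (E / En n) * ω n * ((∑ h, (x h - lhat n h) ^ 2)
        - ∑ h, (ℓ n h - lhat n h) ^ 2) := by
    rw [← Finset.sum_sub_distrib, Finset.sum_eq_single n]
    · simp [Function.update_self]; ring
    · intro m _ hm
      simp [Function.update_of_ne hm]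
    · intro h; exact absurd (Finset.mem_univ n) h
  rw [hf, hf, hW, hW]
  have hupd : ∀ h, Function.update ℓ n x n h = x h := fun h => by
    simp [Function.update_self]
  simp only [hupd]
  have expand : (En n / E) * (((1 - α) * ∑ h, C h (∑ m, Function.update ℓ n x m h)
        + α * ∑ m, (E / En m) * ω m * ∑ h, (Function.update ℓ n x m h - lhat m h) ^ 2)
      - ((1 - α) * ∑ h, C h (∑ m, ℓ m h)
        + α * ∑ m, (E / En m) * ω m * ∑ h, (ℓ m h - lhat m h) ^ 2))
      = (En n / E) * ((1 - α) * ∑ h, C h (∑ m, Function.update ℓ n x m h)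
          - (1 - α) * ∑ h, C h (∑ m, ℓ m h))
        + (En n / E) * α * ((E / En n) * ω n * ((∑ h, (x h - lhat n h) ^ 2)
          - ∑ h, (ℓ n h - lhat n h) ^ 2)) := by
    rw [← key]; ring
  rw [expand]
  field_simp
  ring
end

section
/- For quadratic per-period costs C_h(x) = a_{1,h} x + a_{2,h} x², the hourly-proportional game is an exact potential game with potential W^HP_α(ℓ) = (1−α) Σ_h [ (a_{2,h}/2)((ℓ^h)² + Σ_n (ℓ_n^h)²) + a_{1,h} ℓ^h ] + α Σ_n ω_n Σ_h (ℓ_n^h − ℓ̂_n^h)². Precisely, for every profile ℓ ∈ (ℝ^H)^N, every consumer n, and every unilateral deviation x_n ∈ ℝ^H, one has f_n^α(x_n, ℓ_{−n}) − f_n^α(ℓ_n, ℓ_{−n}) = W^HP_α(x_n, ℓ_{−n}) − W^HP_α(ℓ). -/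
/-- With quadratic per-period costs, the hourly-proportional game is
an exact potential game with potential `W^HP_α`. -/
theorem hp_exact_potential
    (N H : ℕ)
    (a1 a2 : Fin H → ℝ)
    (ω : Fin N → ℝ) (hω : ∀ n, 0 < ω n)
    (lhat : Fin N → Fin H → ℝ)
    (α : ℝ) (hα : α ∈ Set.Icc (0 : ℝ) 1)
    (f : Fin N → (Fin N → Fin H → ℝ) → ℝ)
    (hf : ∀ n ℓ, f n ℓ =
      (1 - α) * ∑ h, ℓ n h * (a1 h + a2 h * (∑ m, ℓ m h))
        + α * (ω n * ∑ h, (ℓ n h - lhat n h) ^ 2))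
    (W : (Fin N → Fin H → ℝ) → ℝ)
    (hW : ∀ ℓ, W ℓ =
      (1 - α) * ∑ h, (a2 h / 2 * ((∑ m, ℓ m h) ^ 2 + ∑ n, (ℓ n h) ^ 2)
          + a1 h * (∑ m, ℓ m h))
        + α * ∑ n, ω n * ∑ h, (ℓ n h - lhat n h) ^ 2) :
    ∀ (ℓ : Fin N → Fin H → ℝ) (n : Fin N) (x : Fin H → ℝ),
      f n (Function.update ℓ n x) - f n ℓ
        = W (Function.update ℓ n x) - W ℓ := by
  intro ℓ n x
  have happ : ∀ (g : Fin H → ℝ) (h : Fin H) (m : Fin N),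
      (fun m => Function.update ℓ n g m h) m = Function.update (fun m => ℓ m h) n (g h) m := by
    intro g h m
    by_cases hm : m = n <;> simp [hm, Function.update]
  have hsum : ∀ h, (∑ m, Function.update ℓ n x m h) = (∑ m, ℓ m h) + (x h - ℓ n h) := by
    intro h
    calc (∑ m, Function.update ℓ n x m h)
        = ∑ m, Function.update (fun m => ℓ m h) n (x h) m := by
          exact Finset.sum_congr rfl fun m _ => happ x h m
      _ = x h + ∑ m ∈ Finset.univ.erase n, ℓ m h := by
          rw [Finset.sum_update_of_mem (Finset.mem_univ n), Finset.sdiff_singleton_eq_erase]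
      _ = (∑ m, ℓ m h) + (x h - ℓ n h) := by
          rw [← Finset.add_sum_erase _ _ (Finset.mem_univ n)]; ring
  have hsumsq : ∀ h, (∑ m, (Function.update ℓ n x m h) ^ 2)
      = (∑ m, (ℓ m h) ^ 2) + ((x h) ^ 2 - (ℓ n h) ^ 2) := by
    intro h
    calc (∑ m, (Function.update ℓ n x m h) ^ 2)
        = ∑ m, (Function.update (fun m => ℓ m h) n (x h) m) ^ 2 := by
          refine Finset.sum_congr rfl fun m _ => ?_
          have := happ x h m
          simp only at this
          rw [this]
      _ = ∑ m, Function.update (fun m => (ℓ m h) ^ 2) n ((x h) ^ 2) m := by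
          refine Finset.sum_congr rfl fun m _ => ?_
          by_cases hm : m = n <;> simp [hm, Function.update]
      _ = (x h) ^ 2 + ∑ m ∈ Finset.univ.erase n, (ℓ m h) ^ 2 := by
          rw [Finset.sum_update_of_mem (Finset.mem_univ n), Finset.sdiff_singleton_eq_erase]
      _ = (∑ m, (ℓ m h) ^ 2) + ((x h) ^ 2 - (ℓ n h) ^ 2) := by
          rw [← Finset.add_sum_erase _ _ (Finset.mem_univ n)]; ring
  have hpref : (∑ m, ω m * ∑ h, (Function.update ℓ n x m h - lhat m h) ^ 2)
      = (∑ m, ω m * ∑ h, (ℓ m h - lhat m h) ^ 2)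
        + (ω n * ∑ h, (x h - lhat n h) ^ 2 - ω n * ∑ h, (ℓ n h - lhat n h) ^ 2) := by
    calc (∑ m, ω m * ∑ h, (Function.update ℓ n x m h - lhat m h) ^ 2)
        = ∑ m, Function.update (fun m => ω m * ∑ h, (ℓ m h - lhat m h) ^ 2) n
            (ω n * ∑ h, (x h - lhat n h) ^ 2) m := by
          refine Finset.sum_congr rfl fun m _ => ?_
          by_cases hm : m = n <;> simp [hm, Function.update]
      _ = ω n * (∑ h, (x h - lhat n h) ^ 2)
            + ∑ m ∈ Finset.univ.erase n, ω m * ∑ h, (ℓ m h - lhat m h) ^ 2 := by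
          rw [Finset.sum_update_of_mem (Finset.mem_univ n), Finset.sdiff_singleton_eq_erase]
      _ = _ := by
          rw [← Finset.add_sum_erase _ (fun m => ω m * ∑ h, (ℓ m h - lhat m h) ^ 2)
            (Finset.mem_univ n)]
          ring
  rw [hf, hf, hW, hW, hpref]
  have hself : ∀ h, Function.update ℓ n x n h = x h := by intro h; simp
  simp only [hself, hsum, hsumsq]
  have hAB : (∑ h, x h * (a1 h + a2 h * ((∑ m, ℓ m h) + (x h - ℓ n h))))
      - (∑ h, ℓ n h * (a1 h + a2 h * (∑ m, ℓ m h)))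
      = (∑ h, (a2 h / 2 * (((∑ m, ℓ m h) + (x h - ℓ n h)) ^ 2
            + ((∑ m, (ℓ m h) ^ 2) + ((x h) ^ 2 - (ℓ n h) ^ 2)))
          + a1 h * ((∑ m, ℓ m h) + (x h - ℓ n h))))
        - (∑ h, (a2 h / 2 * ((∑ m, ℓ m h) ^ 2 + ∑ m, (ℓ m h) ^ 2)
          + a1 h * (∑ m, ℓ m h))) := by
    rw [← Finset.sum_sub_distrib, ← Finset.sum_sub_distrib]
    exact Finset.sum_congr rfl fun h _ => by ring
  linear_combination (1 - α) * hAB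
end

section
/- Suppose the per-period cost functions C_h are convex and differentiable, each feasible set L_n is nonempty, and α ∈ (0,1]. Then the daily-proportional game has exactly one Nash equilibrium, and a profile ℓ ∈ L is a Nash equilibrium if and only if ℓ is the unique minimizer over L of the potential W^DP_α(ℓ) = (1−α) Σ_h C_h(ℓ^h) + α Σ_n (E/E_n) ω_n Σ_h (ℓ_n^h − ℓ̂_n^h)². -/
/-!
`W^DP_α` is an exact potential for the game: consumer `n`'s cost changes under a unilateral
deviation by exactly `E_n / E` times the change of `W^DP_α`. Hence Nash equilibria are the
feasible profiles that minimise `W^DP_α` in each consumer's block of coordinates separately.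
Since `W^DP_α` is convex and differentiable, a block-wise minimiser over the product `L` of
convex sets is a global minimiser: its derivative is nonnegative in each block direction, hence
in every feasible direction, and the gradient inequality concludes. Finally `W^DP_α` is strictly
convex for `α > 0`, so it has exactly one minimiser on the nonempty compact set `L`.
-/

open Set Function

theorem ConvexOn.map_sub_le_of_hasFDerivAt {E : Type*} [NormedAddCommGroup E] [NormedSpace ℝ E]
    {s : Set E} {g : E → ℝ} {g' : E →L[ℝ] ℝ} {x y : E}
    (hg : ConvexOn ℝ s g) (hx : x ∈ s) (hy : y ∈ s) (hd : HasFDerivAt g g' x) :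
    g' (y - x) ≤ g y - g x := by
  have hφ : ConvexOn ℝ (Icc (0 : ℝ) 1) (g ∘ AffineMap.lineMap x y) :=
    (hg.comp_affineMap _).subset (fun t ht => hg.1.lineMap_mem hx hy ht) (convex_Icc 0 1)
  have hd' : HasFDerivAt g g' (AffineMap.lineMap x y (0 : ℝ)) := by simpa using hd
  simpa [slope_def_field] using hφ.le_slope_of_hasDerivAt (by simp) (by simp) zero_lt_one
    (hd'.comp_hasDerivAt (0 : ℝ) AffineMap.hasDerivAt_lineMap)

theorem ConvexOn.fun_sum {ι E : Type*} [AddCommMonoid E] [Module ℝ E] {s : Set E}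
    {t : Finset ι} {f : ι → E → ℝ} (hs : Convex ℝ s) (hf : ∀ i ∈ t, ConvexOn ℝ s (f i)) :
    ConvexOn ℝ s fun x => ∑ i ∈ t, f i x := by
  simpa [Finset.sum_fn] using
    Finset.sum_induction f (ConvexOn ℝ s) (fun _ _ => ConvexOn.add) (convexOn_const 0 hs) hf

theorem convex_setOf_forall_ne_eq {ι : Type*} {E : ι → Type*} [∀ i, AddCommGroup (E i)]
    [∀ i, Module ℝ (E i)] (ℓ : ∀ i, E i) (i : ι) :
    Convex ℝ {y : ∀ i, E i | ∀ j ≠ i, y j = ℓ j} := by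
  intro y hy z hz a b _ _ hab j hj
  simp [hy j hj, hz j hj, ← add_smul, hab]

section BlockCoordinate

variable {ι : Type*} [Fintype ι] [DecidableEq ι] {E : ι → Type*}
  [∀ i, NormedAddCommGroup (E i)] [∀ i, NormedSpace ℝ (E i)]
  {s : ∀ i, Set (E i)} {g : (∀ i, E i) → ℝ} {g' : (∀ i, E i) →L[ℝ] ℝ} {ℓ : ∀ i, E i}

theorem HasFDerivAt.apply_update_sub_nonneg (hs : Convex ℝ (univ.pi s))
    (hd : HasFDerivAt g g' ℓ) (hℓ : ℓ ∈ univ.pi s) (i : ι) {y : E i} (hy : y ∈ s i)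
    (hmin : ∀ z ∈ s i, g ℓ ≤ g (update ℓ i z)) : 0 ≤ g' (update ℓ i y - ℓ) := by
  set S := univ.pi s ∩ {x | ∀ j ≠ i, x j = ℓ j}
  have hminS : IsMinOn g S ℓ := fun x ⟨hxs, hx⟩ => by
    simpa [← eq_update_iff.mpr ⟨rfl, hx⟩] using hmin (x i) (hxs i trivial)
  have hseg : segment ℝ ℓ (update ℓ i y) ⊆ S :=
    (hs.inter (convex_setOf_forall_ne_eq ℓ i)).segment_subset ⟨hℓ, fun _ _ => rfl⟩
      ⟨(update_mem_pi_iff_of_mem hℓ).2 fun _ => hy, fun j hj => update_of_ne hj _ _⟩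
  exact hminS.localize.hasFDerivWithinAt_nonneg hd.hasFDerivWithinAt
    (sub_mem_posTangentConeAt_of_segment_subset hseg)

theorem ConvexOn.isMinOn_univ_pi_iff (hg : ConvexOn ℝ (univ.pi s) g) (hd : HasFDerivAt g g' ℓ)
    (hℓ : ℓ ∈ univ.pi s) :
    IsMinOn g (univ.pi s) ℓ ↔ ∀ i, ∀ y ∈ s i, g ℓ ≤ g (update ℓ i y) := by
  refine ⟨fun h i y hy => h ((update_mem_pi_iff_of_mem hℓ).2 fun _ => hy), fun h x hx => ?_⟩
  have hsplit : x - ℓ = ∑ i, (update ℓ i (x i) - ℓ) := by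
    conv_lhs => rw [← Finset.univ_sum_single (x - ℓ)]
    refine Finset.sum_congr rfl fun i _ => ?_
    ext j
    rcases eq_or_ne j i with rfl | hj <;> simp [*]
  have hdir : 0 ≤ g' (x - ℓ) := by
    rw [hsplit, map_sum]
    exact Finset.sum_nonneg fun i _ => hd.apply_update_sub_nonneg hg.1 hℓ i (hx i trivial) (h i)
  simpa using hdir.trans (hg.map_sub_le_of_hasFDerivAt hℓ hx hd)

end BlockCoordinate

theorem Fintype.sum_apply_update_sub {ι : Type*} [Fintype ι] [DecidableEq ι] {β : ι → Type*}
    {M : Type*} [AddCommGroup M] (G : ∀ i, β i → M) (ℓ : ∀ i, β i) (n : ι) (x : β n) :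
    ∑ m, G m (update ℓ n x m) - ∑ m, G m (ℓ m) = G n x - G n (ℓ n) := by
  rw [← Finset.sum_sub_distrib, Finset.sum_eq_single n (fun m _ hm => by simp [update_of_ne hm])
    (by simp), update_self]

variable {ι κ : Type*} [Fintype ι] [Fintype κ]

theorem strictConvexOn_weighted_sum_sq {c : ι → ℝ} (hc : ∀ i, 0 < c i) (a : ι → κ → ℝ) :
    StrictConvexOn ℝ univ fun x : ι → κ → ℝ => ∑ i, c i * ∑ k, (x i k - a i k) ^ 2 := by
  refine ⟨convex_univ, fun x _ y _ hxy s t hs ht hst => ?_⟩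
  obtain rfl : t = 1 - s := by linarith
  obtain ⟨i, k, hik⟩ : ∃ i k, x i k ≠ y i k := by
    by_contra! h
    exact hxy (funext fun i => funext (h i))
  have hgap : 0 < ∑ i, c i * ∑ k, (x i k - y i k) ^ 2 :=
    Finset.sum_pos' (fun i _ => mul_nonneg (hc i).le (Finset.sum_nonneg fun _ _ => sq_nonneg _))
      ⟨i, Finset.mem_univ _, mul_pos (hc i) (Finset.sum_pos'
        (fun _ _ => sq_nonneg _) ⟨k, Finset.mem_univ _, by positivity [sub_ne_zero.2 hik]⟩)⟩
  have hdefect : s * ∑ i, c i * ∑ k, (x i k - a i k) ^ 2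
        + (1 - s) * ∑ i, c i * ∑ k, (y i k - a i k) ^ 2
        - ∑ i, c i * ∑ k, ((s • x + (1 - s) • y) i k - a i k) ^ 2
      = s * (1 - s) * ∑ i, c i * ∑ k, (x i k - y i k) ^ 2 := by
    simp only [Finset.mul_sum, ← Finset.sum_add_distrib, ← Finset.sum_sub_distrib]
    refine Finset.sum_congr rfl fun i _ => Finset.sum_congr rfl fun k _ => ?_
    simp only [Pi.add_apply, Pi.smul_apply, smul_eq_mul]
    ring
  simp only [smul_eq_mul]
  nlinarith [mul_pos hs ht]

def feasibleLoads (e : ℝ) (lb ub : κ → ℝ) : Set (κ → ℝ) :=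
  {x | ∑ h, x h = e ∧ ∀ h, lb h ≤ x h ∧ x h ≤ ub h}

theorem feasibleLoads_eq_inter_Icc (e : ℝ) (lb ub : κ → ℝ) :
    feasibleLoads e lb ub = {x | ∑ h, x h = e} ∩ Icc lb ub := by
  ext x
  simp [feasibleLoads, Pi.le_def, forall_and]

theorem convex_feasibleLoads (e : ℝ) (lb ub : κ → ℝ) : Convex ℝ (feasibleLoads e lb ub) := by
  rw [feasibleLoads_eq_inter_Icc]
  refine Convex.inter (fun x hx y hy a b _ _ hab => ?_) (convex_Icc lb ub)
  simp_all [Finset.sum_add_distrib, ← Finset.mul_sum, ← add_mul]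

theorem isCompact_feasibleLoads (e : ℝ) (lb ub : κ → ℝ) : IsCompact (feasibleLoads e lb ub) := by
  rw [feasibleLoads_eq_inter_Icc]
  exact isCompact_Icc.inter_left (isClosed_eq (by fun_prop) continuous_const)

noncomputable def dpObjective (C : κ → ℝ → ℝ) (En ω : ι → ℝ) (lhat : ι → κ → ℝ) (α : ℝ)
    (n : ι) (ℓ : ι → κ → ℝ) : ℝ :=
  (1 - α) * ((En n / ∑ m, En m) * ∑ h, C h (∑ m, ℓ m h))
    + α * (ω n * ∑ h, (ℓ n h - lhat n h) ^ 2)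

noncomputable def dpPotential (C : κ → ℝ → ℝ) (En ω : ι → ℝ) (lhat : ι → κ → ℝ) (α : ℝ)
    (ℓ : ι → κ → ℝ) : ℝ :=
  (1 - α) * ∑ h, C h (∑ m, ℓ m h)
    + α * ∑ n, (∑ m, En m) / En n * ω n * ∑ h, (ℓ n h - lhat n h) ^ 2

section DailyProportional

variable {C : κ → ℝ → ℝ} {En ω : ι → ℝ} {lhat : ι → κ → ℝ} {α : ℝ}

theorem dpObjective_update_sub [DecidableEq ι] {n : ι} (hEn : En n ≠ 0) (hE : ∑ m, En m ≠ 0)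
    (ℓ : ι → κ → ℝ) (x : κ → ℝ) :
    dpObjective C En ω lhat α n (update ℓ n x) - dpObjective C En ω lhat α n ℓ
      = (En n / ∑ m, En m)
        * (dpPotential C En ω lhat α (update ℓ n x) - dpPotential C En ω lhat α ℓ) := by
  have hload (h : κ) : ∑ m, update ℓ n x m h = ∑ m, ℓ m h + (x h - ℓ n h) :=
    eq_add_of_sub_eq' (Fintype.sum_apply_update_sub (fun _ y => y h) ℓ n x)
  have hpref := eq_add_of_sub_eq' (Fintype.sum_apply_update_sub
    (fun m y => (∑ m, En m) / En m * ω m * ∑ h, (y h - lhat m h) ^ 2) ℓ n x)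
  simp only [dpObjective, dpPotential, hload, hpref, update_self]
  field_simp
  ring

theorem dpObjective_le_update_iff [DecidableEq ι] (hEn : ∀ m, 0 < En m) (n : ι)
    (ℓ : ι → κ → ℝ) (x : κ → ℝ) :
    dpObjective C En ω lhat α n ℓ ≤ dpObjective C En ω lhat α n (update ℓ n x)
      ↔ dpPotential C En ω lhat α ℓ ≤ dpPotential C En ω lhat α (update ℓ n x) := by
  have hE : 0 < ∑ m, En m := Finset.sum_pos (fun m _ => hEn m) ⟨n, Finset.mem_univ n⟩
  rw [← sub_nonneg, dpObjective_update_sub (hEn n).ne' hE.ne', ← sub_nonneg (a := dpPotential ..)]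
  exact mul_nonneg_iff_of_pos_left (div_pos (hEn n) hE)

theorem dpPotential_strictConvexOn (hC : ∀ h, ConvexOn ℝ univ (C h)) (hEn : ∀ n, 0 < En n)
    (hω : ∀ n, 0 < ω n) (hα : α ∈ Ioc (0 : ℝ) 1) :
    StrictConvexOn ℝ univ (dpPotential C En ω lhat α) := by
  have hcost : ConvexOn ℝ univ fun ℓ : ι → κ → ℝ => ∑ h, C h (∑ m, ℓ m h) :=
    ConvexOn.fun_sum convex_univ fun h _ => ⟨convex_univ, fun _ _ _ _ _ _ ha hb hab => by
      simpa [Finset.sum_add_distrib, ← Finset.mul_sum] using (hC h).2 trivial trivial ha hb hab⟩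
  have hweight (n : ι) : 0 < α * ((∑ m, En m) / En n * ω n) := by
    have hE : 0 < ∑ m, En m := Finset.sum_pos (fun m _ => hEn m) ⟨n, Finset.mem_univ n⟩
    exact mul_pos hα.1 (mul_pos (div_pos hE (hEn n)) (hω n))
  refine ((hcost.smul (sub_nonneg.2 hα.2)).add_strictConvexOn
    (strictConvexOn_weighted_sum_sq hweight lhat)).congr fun ℓ _ => ?_
  simp [dpPotential, Finset.mul_sum, mul_assoc]

theorem dpPotential_differentiable (hC : ∀ h, Differentiable ℝ (C h)) :
    Differentiable ℝ (dpPotential C En ω lhat α) := by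
  unfold dpPotential
  fun_prop

end DailyProportional

theorem dp_unique_NE_potential_minimizer_general
    (N H : ℕ)
    (En : Fin N → ℝ) (hEn : ∀ n, 0 < En n)
    (ω : Fin N → ℝ) (hω : ∀ n, 0 < ω n)
    (lhat : Fin N → Fin H → ℝ)
    (lb ub : Fin N → Fin H → ℝ)
    (C : Fin H → ℝ → ℝ)
    (hCconv : ∀ h, ConvexOn ℝ Set.univ (C h))
    (hCdiff : ∀ h, Differentiable ℝ (C h))
    (α : ℝ) (hα : α ∈ Set.Ioc (0 : ℝ) 1)
    (E : ℝ) (hE : E = ∑ n, En n)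
    (Ln : Fin N → Set (Fin H → ℝ))
    (hLn : ∀ n, Ln n =
      {x | (∑ h, x h) = En n ∧ ∀ h, lb n h ≤ x h ∧ x h ≤ ub n h})
    (hLnNonempty : ∀ n, (Ln n).Nonempty)
    (L : Set (Fin N → Fin H → ℝ))
    (hL : L = {ℓ | ∀ n, ℓ n ∈ Ln n})
    (f : Fin N → (Fin N → Fin H → ℝ) → ℝ)
    (hf : ∀ n ℓ, f n ℓ =
      (1 - α) * ((En n / E) * ∑ h, C h (∑ m, ℓ m h))
        + α * (ω n * ∑ h, (ℓ n h - lhat n h) ^ 2))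
    (W : (Fin N → Fin H → ℝ) → ℝ)
    (hW : ∀ ℓ, W ℓ =
      (1 - α) * ∑ h, C h (∑ m, ℓ m h)
        + α * ∑ n, (E / En n) * ω n * ∑ h, (ℓ n h - lhat n h) ^ 2)
    (isNE : (Fin N → Fin H → ℝ) → Prop)
    (hNE : ∀ ℓ, isNE ℓ ↔ ℓ ∈ L ∧
      ∀ n, ∀ x ∈ Ln n, f n ℓ ≤ f n (Function.update ℓ n x)) :
    (∃! ℓ, isNE ℓ) ∧
      (∀ ℓ ∈ L, (isNE ℓ ↔
        ((∀ x ∈ L, W ℓ ≤ W x) ∧ (∀ x ∈ L, W x = W ℓ → x = ℓ)))) := by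
  subst hE
  obtain rfl : f = dpObjective C En ω lhat α := funext fun n => funext (hf n)
  have hWdef : W = dpPotential C En ω lhat α := funext hW
  have hLnf : Ln = fun n => feasibleLoads (En n) (lb n) (ub n) := funext hLn
  obtain rfl : L = univ.pi Ln := by rw [hL]; ext; simp
  have hconv : StrictConvexOn ℝ (univ.pi Ln) W := by
    rw [hWdef, hLnf]
    exact (dpPotential_strictConvexOn hCconv hEn hω hα).subset (subset_univ _)
      (convex_pi fun n _ => convex_feasibleLoads _ _ _)
  have hdiff : Differentiable ℝ W := hWdef ▸ dpPotential_differentiable hCdiff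
  have hNE_iff (ℓ) : isNE ℓ ↔ ℓ ∈ univ.pi Ln ∧ IsMinOn W (univ.pi Ln) ℓ := by
    rw [hNE]
    refine and_congr_right fun hℓ => ?_
    rw [hconv.convexOn.isMinOn_univ_pi_iff (hdiff ℓ).hasFDerivAt hℓ, hWdef]
    simp only [dpObjective_le_update_iff hEn]
  have hcompact : IsCompact (univ.pi Ln) := by
    rw [hLnf]
    exact isCompact_univ_pi fun n => isCompact_feasibleLoads _ _ _
  obtain ⟨ℓ₀, hℓ₀, hmin₀⟩ := hcompact.exists_isMinOn (univ_pi_nonempty_iff.2 hLnNonempty)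
    hdiff.continuous.continuousOn
  refine ⟨⟨ℓ₀, (hNE_iff ℓ₀).2 ⟨hℓ₀, hmin₀⟩, fun ℓ hℓ => ?_⟩, fun ℓ hℓ => ?_⟩
  · obtain ⟨hℓL, hmin⟩ := (hNE_iff ℓ).1 hℓ
    exact hconv.eq_of_isMinOn hmin hmin₀ hℓL hℓ₀
  · rw [hNE_iff, ← isMinOn_iff]
    refine ⟨fun ⟨_, hmin⟩ => ⟨hmin, fun x hx hWx => ?_⟩, fun ⟨hmin, _⟩ => ⟨hℓ, hmin⟩⟩
    exact hconv.eq_of_isMinOn (fun y hy => hWx ▸ hmin hy) hmin hx hℓ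

/-- With convex differentiable per-period costs, nonempty feasible
sets and `α ∈ (0,1]`, the daily-proportional game has exactly one Nash
equilibrium, and a feasible profile is a Nash equilibrium iff it is the unique
minimizer of the potential `W^DP_α` over `L`. -/
theorem dp_unique_NE_potential_minimizer
    (N H : ℕ)
    (En : Fin N → ℝ) (hEn : ∀ n, 0 < En n)
    (ω : Fin N → ℝ) (hω : ∀ n, 0 < ω n)
    (lhat : Fin N → Fin H → ℝ)
    (lb ub : Fin N → Fin H → ℝ)
    (hlb : ∀ n h, 0 ≤ lb n h) (hbnds : ∀ n h, lb n h ≤ ub n h)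
    (C : Fin H → ℝ → ℝ)
    (hCconv : ∀ h, ConvexOn ℝ Set.univ (C h))
    (hCdiff : ∀ h, Differentiable ℝ (C h))
    (α : ℝ) (hα : α ∈ Set.Ioc (0 : ℝ) 1)
    (E : ℝ) (hE : E = ∑ n, En n)
    (Ln : Fin N → Set (Fin H → ℝ))
    (hLn : ∀ n, Ln n =
      {x | (∑ h, x h) = En n ∧ ∀ h, lb n h ≤ x h ∧ x h ≤ ub n h})
    (hLnNonempty : ∀ n, (Ln n).Nonempty)
    (L : Set (Fin N → Fin H → ℝ))
    (hL : L = {ℓ | ∀ n, ℓ n ∈ Ln n})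
    (f : Fin N → (Fin N → Fin H → ℝ) → ℝ)
    (hf : ∀ n ℓ, f n ℓ =
      (1 - α) * ((En n / E) * ∑ h, C h (∑ m, ℓ m h))
        + α * (ω n * ∑ h, (ℓ n h - lhat n h) ^ 2))
    (W : (Fin N → Fin H → ℝ) → ℝ)
    (hW : ∀ ℓ, W ℓ =
      (1 - α) * ∑ h, C h (∑ m, ℓ m h)
        + α * ∑ n, (E / En n) * ω n * ∑ h, (ℓ n h - lhat n h) ^ 2)
    (isNE : (Fin N → Fin H → ℝ) → Prop)
    (hNE : ∀ ℓ, isNE ℓ ↔ ℓ ∈ L ∧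
      ∀ n, ∀ x ∈ Ln n, f n ℓ ≤ f n (Function.update ℓ n x)) :
    (∃! ℓ, isNE ℓ) ∧
      (∀ ℓ ∈ L, (isNE ℓ ↔
        ((∀ x ∈ L, W ℓ ≤ W x) ∧ (∀ x ∈ L, W x = W ℓ → x = ℓ)))) :=
  dp_unique_NE_potential_minimizer_general N H En hEn ω hω lhat lb ub C hCconv hCdiff α hα E hE Ln
    hLn hLnNonempty L hL f hf W hW isNE hNE
end

section
/- Suppose the per-period costs are quadratic, C_h(x) = a_{1,h} x + a_{2,h} x² with a_{2,h} > 0 for all h, each feasible set L_n is nonempty, and α ∈ [0,1]. Then the hourly-proportional game has exactly one Nash equilibrium, and a profile ℓ ∈ L is a Nash equilibrium if and only if ℓ is the unique minimizer over L of the potential W^HP_α(ℓ) = (1−α) Σ_h [ (a_{2,h}/2)((ℓ^h)² + Σ_n (ℓ_n^h)²) + a_{1,h} ℓ^h ] + α Σ_n ω_n Σ_h (ℓ_n^h − ℓ̂_n^h)². -/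
/-!
`W^HP_α` is an exact potential of the game: `W - f n` does not depend on `ℓ n`, so the Nash
equilibria are exactly the feasible profiles at which `W` cannot be lowered by moving a single
block `ℓ n` inside `L n`. Moreover `W` is quadratic, `W (ℓ + d) = W ℓ + DW ℓ d + Q d`, with `Q`
positive definite because `a_{2,h} > 0`, `ω_n > 0` and `α ∈ [0,1]`. At a block-wise minimizer
the first-order condition `DW ℓ (Pi.single n (x n - ℓ n)) ≥ 0` holds on each block, hence, by
linearity, `DW ℓ (x - ℓ) ≥ 0` on all of `L`, so `W x ≥ W ℓ + Q (x - ℓ)`: every equilibrium is the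
strict global minimizer of `W` on `L`. Conversely a global minimizer exists, `L` being compact and
nonempty, and it is in particular block-wise minimal.
-/

open Finset Function Filter Topology

theorem nonneg_of_forall_mul_add_sq_mul_nonneg {φ q : ℝ}
    (h : ∀ t ∈ Set.Ioc (0 : ℝ) 1, 0 ≤ t * φ + t ^ 2 * q) : 0 ≤ φ := by
  have hlim : Tendsto (fun t : ℝ ↦ φ + t * q) (𝓝[>] 0) (𝓝 φ) :=
    ((by fun_prop : Continuous fun t : ℝ ↦ φ + t * q).tendsto' 0 φ (by simp)).mono_left
      nhdsWithin_le_nhds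
  refine ge_of_tendsto hlim ?_
  filter_upwards [Ioc_mem_nhdsGT one_pos] with t ht
  exact nonneg_of_mul_nonneg_right (by linear_combination h t ht) ht.1

theorem update_add_eq_add_single {ι : Type*} [DecidableEq ι] {E : ι → Type*}
    [∀ i, AddCommGroup (E i)] (ℓ : ∀ i, E i) (i : ι) (v : E i) :
    update ℓ i (ℓ i + v) = ℓ + Pi.single i v := by
  rw [Pi.update_eq_sub_add_single, Pi.single_add]
  abel

theorem add_le_of_forall_le_update {ι : Type*} [Fintype ι] [DecidableEq ι] {E : ι → Type*}
    [∀ i, AddCommGroup (E i)] [∀ i, Module ℝ (E i)] {F Q : (∀ i, E i) → ℝ} {ℓ : ∀ i, E i}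
    (D : (∀ i, E i) →ₗ[ℝ] ℝ) (hF : ∀ d, F (ℓ + d) = F ℓ + D d + Q d)
    (hQ : ∀ (t : ℝ) d, Q (t • d) = t ^ 2 * Q d) {S : ∀ i, Set (E i)} (hS : ∀ i, Convex ℝ (S i))
    (hℓ : ℓ ∈ Set.univ.pi S) (hblock : ∀ i, ∀ y ∈ S i, F ℓ ≤ F (update ℓ i y))
    {x : ∀ i, E i} (hx : x ∈ Set.univ.pi S) :
    F ℓ + Q (x - ℓ) ≤ F x := by
  have hblock_deriv : ∀ i, 0 ≤ D (Pi.single i (x i - ℓ i)) := fun i ↦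
    nonneg_of_forall_mul_add_sq_mul_nonneg (q := Q (Pi.single i (x i - ℓ i))) fun t ht ↦ by
      have := hblock i _ <|
        (hS i).add_smul_sub_mem (hℓ i trivial) (hx i trivial) (Set.Ioc_subset_Icc_self ht)
      rw [update_add_eq_add_single, Pi.single_smul, hF, map_smul, hQ] at this
      linear_combination this
  have hderiv : 0 ≤ D (x - ℓ) := by
    rw [← Finset.univ_sum_single (x - ℓ), map_sum]
    exact sum_nonneg fun i _ ↦ hblock_deriv i
  have := hF (x - ℓ)
  rw [add_sub_cancel] at this
  linarith

theorem setOf_sum_eq_and_forall_le_le {ι : Type*} [Fintype ι] (E : ℝ) (lb ub : ι → ℝ) :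
    {x : ι → ℝ | ∑ i, x i = E ∧ ∀ i, lb i ≤ x i ∧ x i ≤ ub i}
      = {x | ∑ i, x i = E} ∩ Set.Icc lb ub := by
  ext x
  simp [Pi.le_def, forall_and]

theorem isCompact_setOf_sum_eq_and_forall_le_le {ι : Type*} [Fintype ι] (E : ℝ) (lb ub : ι → ℝ) :
    IsCompact {x : ι → ℝ | ∑ i, x i = E ∧ ∀ i, lb i ≤ x i ∧ x i ≤ ub i} := by
  rw [setOf_sum_eq_and_forall_le_le]
  exact isCompact_Icc.inter_left (isClosed_eq (by fun_prop) continuous_const)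

theorem convex_setOf_sum_eq_and_forall_le_le {ι : Type*} [Fintype ι] (E : ℝ) (lb ub : ι → ℝ) :
    Convex ℝ {x : ι → ℝ | ∑ i, x i = E ∧ ∀ i, lb i ≤ x i ∧ x i ≤ ub i} := by
  rw [setOf_sum_eq_and_forall_le_le]
  have hsum : IsLinearMap ℝ fun x : ι → ℝ ↦ ∑ i, x i :=
    ⟨fun _ _ ↦ sum_add_distrib, fun c x ↦ by simp [mul_sum]⟩
  exact (convex_hyperplane hsum E).inter (convex_Icc lb ub)

theorem sq_sum_add_sum_sq_sub_mul_eq_subtype_ne {ι : Type*} [Fintype ι] [DecidableEq ι]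
    (a1 a2 : ℝ) (y : ι → ℝ) (i : ι) :
    a2 / 2 * ((∑ j, y j) ^ 2 + ∑ j, y j ^ 2) + a1 * ∑ j, y j - y i * (a1 + a2 * ∑ j, y j)
      = a2 / 2 * ((∑ j : {j // j ≠ i}, y j) ^ 2 + ∑ j : {j // j ≠ i}, y j ^ 2)
        + a1 * ∑ j : {j // j ≠ i}, y j := by
  simp only [Fintype.sum_eq_add_sum_subtype_ne _ i]
  ring

section HourlyProportional

variable {N H : ℕ} (a1 a2 : Fin H → ℝ) (α : ℝ) (ω : Fin N → ℝ) (lhat : Fin N → Fin H → ℝ)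

noncomputable def hpObjective (n : Fin N) (ℓ : Fin N → Fin H → ℝ) : ℝ :=
  (1 - α) * ∑ h, ℓ n h * (a1 h + a2 h * (∑ m, ℓ m h))
    + α * (ω n * ∑ h, (ℓ n h - lhat n h) ^ 2)

noncomputable def hpPotential (ℓ : Fin N → Fin H → ℝ) : ℝ :=
  (1 - α) * ∑ h, (a2 h / 2 * ((∑ m, ℓ m h) ^ 2 + ∑ n, (ℓ n h) ^ 2) + a1 h * (∑ m, ℓ m h))
    + α * ∑ n, ω n * ∑ h, (ℓ n h - lhat n h) ^ 2

noncomputable def hpPotentialDeriv (ℓ : Fin N → Fin H → ℝ) : (Fin N → Fin H → ℝ) →ₗ[ℝ] ℝ where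
  toFun d := (1 - α) * ∑ h, ∑ n, (a1 h + a2 h * (∑ m, ℓ m h + ℓ n h)) * d n h
    + α * ∑ n, ω n * ∑ h, 2 * (ℓ n h - lhat n h) * d n h
  map_add' d e := by
    simp only [Pi.add_apply, mul_add, sum_add_distrib]
    ring
  map_smul' t d := by
    simp only [Pi.smul_apply, smul_eq_mul, RingHom.id_apply, mul_left_comm _ t, ← mul_sum]
    ring

noncomputable def hpCurvature (d : Fin N → Fin H → ℝ) : ℝ :=
  (1 - α) * ∑ h, a2 h / 2 * ((∑ n, d n h) ^ 2 + ∑ n, d n h ^ 2)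
    + α * ∑ n, ω n * ∑ h, d n h ^ 2

theorem hpPotential_add (ℓ d : Fin N → Fin H → ℝ) :
    hpPotential a1 a2 α ω lhat (ℓ + d) = hpPotential a1 a2 α ω lhat ℓ
      + hpPotentialDeriv a1 a2 α ω lhat ℓ d + hpCurvature a2 α ω d := by
  simp only [hpPotential, hpPotentialDeriv, hpCurvature, LinearMap.coe_mk, AddHom.coe_mk,
    Pi.add_apply, add_sub_right_comm _ (d _ _), sum_add_distrib, add_sq, add_mul, mul_add,
    ← mul_sum, mul_assoc]
  ring_nf

theorem hpCurvature_smul (t : ℝ) (d : Fin N → Fin H → ℝ) :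
    hpCurvature a2 α ω (t • d) = t ^ 2 * hpCurvature a2 α ω d := by
  simp only [hpCurvature, Pi.smul_apply, smul_eq_mul, mul_pow, ← mul_sum, ← mul_add,
    mul_left_comm _ (t ^ 2)]

theorem hpCurvature_pos (hα : α ∈ Set.Icc (0 : ℝ) 1) (ha2 : ∀ h, 0 < a2 h) (hω : ∀ n, 0 < ω n)
    {d : Fin N → Fin H → ℝ} (hd : d ≠ 0) : 0 < hpCurvature a2 α ω d := by
  obtain ⟨n, h, hnh⟩ : ∃ n h, d n h ≠ 0 := by
    by_contra! hzero
    exact hd (funext₂ hzero)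
  have hsq : 0 < d n h ^ 2 := by positivity
  have hhour : 0 < ∑ h, a2 h / 2 * ((∑ n, d n h) ^ 2 + ∑ n, d n h ^ 2) := by
    refine sum_pos' (fun h _ ↦ mul_nonneg (half_pos (ha2 h)).le (by positivity)) ⟨h, mem_univ h, ?_⟩
    have := single_le_sum (fun m _ ↦ sq_nonneg (d m h)) (mem_univ n)
    exact mul_pos (half_pos (ha2 h)) (add_pos_of_nonneg_of_pos (sq_nonneg _) (hsq.trans_le this))
  have hplayer : 0 < ∑ n, ω n * ∑ h, d n h ^ 2 := by
    refine sum_pos' (fun m _ ↦ mul_nonneg (hω m).le (by positivity)) ⟨n, mem_univ n, ?_⟩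
    have := single_le_sum (fun k _ ↦ sq_nonneg (d n k)) (mem_univ h)
    exact mul_pos (hω n) (hsq.trans_le this)
  unfold hpCurvature
  rcases hα.2.lt_or_eq with hlt | rfl
  · nlinarith [mul_pos (sub_pos.2 hlt) hhour, mul_nonneg hα.1 hplayer.le]
  · simpa using hplayer

theorem exists_hpPotential_sub_hpObjective_eq (n : Fin N) :
    ∃ R : ({m // m ≠ n} → Fin H → ℝ) → ℝ, ∀ ℓ,
      hpPotential a1 a2 α ω lhat ℓ - hpObjective a1 a2 α ω lhat n ℓ = R fun m ↦ ℓ m := by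
  refine ⟨fun r ↦ (1 - α) * ∑ h, (a2 h / 2 * ((∑ m, r m h) ^ 2 + ∑ m, r m h ^ 2)
      + a1 h * ∑ m, r m h) + α * ∑ m : {m // m ≠ n}, ω m * ∑ h, (r m h - lhat m h) ^ 2,
    fun ℓ ↦ ?_⟩
  have hour := fun h ↦ sq_sum_add_sum_sq_sub_mul_eq_subtype_ne (a1 h) (a2 h) (fun m ↦ ℓ m h) n
  simp only [hpPotential, hpObjective, ← hour, sum_sub_distrib,
    Fintype.sum_eq_add_sum_subtype_ne (fun m ↦ ω m * ∑ h, (ℓ m h - lhat m h) ^ 2) n]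
  ring

theorem hpPotential_update_sub (ℓ : Fin N → Fin H → ℝ) (n : Fin N) (x : Fin H → ℝ) :
    hpPotential a1 a2 α ω lhat (update ℓ n x) - hpPotential a1 a2 α ω lhat ℓ
      = hpObjective a1 a2 α ω lhat n (update ℓ n x) - hpObjective a1 a2 α ω lhat n ℓ := by
  obtain ⟨R, hR⟩ := exists_hpPotential_sub_hpObjective_eq a1 a2 α ω lhat n
  have hothers : (fun m : {m // m ≠ n} ↦ update ℓ n x m) = fun m : {m // m ≠ n} ↦ ℓ m :=
    funext fun m ↦ update_of_ne m.2 x ℓ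
  have := hR (update ℓ n x)
  rw [hothers, ← hR ℓ] at this
  linarith

theorem hpPotential_lt_of_forall_le_update (hα : α ∈ Set.Icc (0 : ℝ) 1) (ha2 : ∀ h, 0 < a2 h)
    (hω : ∀ n, 0 < ω n) {S : Fin N → Set (Fin H → ℝ)} (hS : ∀ n, Convex ℝ (S n))
    {ℓ : Fin N → Fin H → ℝ} (hℓ : ℓ ∈ Set.univ.pi S)
    (hblock : ∀ n, ∀ y ∈ S n,
      hpPotential a1 a2 α ω lhat ℓ ≤ hpPotential a1 a2 α ω lhat (update ℓ n y))
    {x : Fin N → Fin H → ℝ} (hx : x ∈ Set.univ.pi S) (hxℓ : x ≠ ℓ) :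
    hpPotential a1 a2 α ω lhat ℓ < hpPotential a1 a2 α ω lhat x := by
  have := add_le_of_forall_le_update _ (hpPotential_add a1 a2 α ω lhat ℓ) (hpCurvature_smul a2 α ω)
    hS hℓ hblock hx
  linarith [hpCurvature_pos a2 α ω hα ha2 hω (sub_ne_zero.2 hxℓ)]

theorem continuous_hpPotential : Continuous (hpPotential a1 a2 α ω lhat) := by
  unfold hpPotential
  fun_prop

end HourlyProportional

theorem hp_unique_NE_potential_minimizer_general
    (N H : ℕ)
    (En : Fin N → ℝ)
    (ω : Fin N → ℝ) (hω : ∀ n, 0 < ω n)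
    (lhat : Fin N → Fin H → ℝ)
    (lb ub : Fin N → Fin H → ℝ)
    (a1 a2 : Fin H → ℝ) (ha2 : ∀ h, 0 < a2 h)
    (α : ℝ) (hα : α ∈ Set.Icc (0 : ℝ) 1)
    (Ln : Fin N → Set (Fin H → ℝ))
    (hLn : ∀ n, Ln n =
      {x | (∑ h, x h) = En n ∧ ∀ h, lb n h ≤ x h ∧ x h ≤ ub n h})
    (hLnNonempty : ∀ n, (Ln n).Nonempty)
    (L : Set (Fin N → Fin H → ℝ))
    (hL : L = {ℓ | ∀ n, ℓ n ∈ Ln n})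
    (f : Fin N → (Fin N → Fin H → ℝ) → ℝ)
    (hf : ∀ n ℓ, f n ℓ =
      (1 - α) * ∑ h, ℓ n h * (a1 h + a2 h * (∑ m, ℓ m h))
        + α * (ω n * ∑ h, (ℓ n h - lhat n h) ^ 2))
    (W : (Fin N → Fin H → ℝ) → ℝ)
    (hW : ∀ ℓ, W ℓ =
      (1 - α) * ∑ h, (a2 h / 2 * ((∑ m, ℓ m h) ^ 2 + ∑ n, (ℓ n h) ^ 2)
          + a1 h * (∑ m, ℓ m h))
        + α * ∑ n, ω n * ∑ h, (ℓ n h - lhat n h) ^ 2)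
    (isNE : (Fin N → Fin H → ℝ) → Prop)
    (hNE : ∀ ℓ, isNE ℓ ↔ ℓ ∈ L ∧
      ∀ n, ∀ x ∈ Ln n, f n ℓ ≤ f n (Function.update ℓ n x)) :
    (∃! ℓ, isNE ℓ) ∧
      (∀ ℓ ∈ L, (isNE ℓ ↔
        ((∀ x ∈ L, W ℓ ≤ W x) ∧ (∀ x ∈ L, W x = W ℓ → x = ℓ)))) := by
  obtain rfl : W = hpPotential a1 a2 α ω lhat := funext hW
  obtain rfl : f = hpObjective a1 a2 α ω lhat := funext₂ hf
  obtain rfl : L = Set.univ.pi Ln := by rw [hL]; ext; simp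
  set W := hpPotential a1 a2 α ω lhat
  have hNE_iff : ∀ ℓ, isNE ℓ ↔ ℓ ∈ Set.univ.pi Ln ∧ ∀ n, ∀ x ∈ Ln n, W ℓ ≤ W (update ℓ n x) := by
    refine fun ℓ ↦ (hNE ℓ).trans <| and_congr_right fun _ ↦ forall₂_congr fun n x ↦ ?_
    rw [← sub_nonneg, ← hpPotential_update_sub, sub_nonneg]
  have hNE_lt : ∀ ℓ, isNE ℓ → ∀ x ∈ Set.univ.pi Ln, x ≠ ℓ → W ℓ < W x := fun ℓ hℓ x hx ↦
    hpPotential_lt_of_forall_le_update a1 a2 α ω lhat hα ha2 hω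
      (fun n ↦ hLn n ▸ convex_setOf_sum_eq_and_forall_le_le _ _ _) ((hNE_iff ℓ).1 hℓ).1
      ((hNE_iff ℓ).1 hℓ).2 hx
  have hmin_NE : ∀ ℓ ∈ Set.univ.pi Ln, IsMinOn W (Set.univ.pi Ln) ℓ → isNE ℓ := fun ℓ hℓ hmin ↦
    (hNE_iff ℓ).2 ⟨hℓ, fun n x hx ↦ hmin ((Set.update_mem_pi_iff_of_mem hℓ).2 fun _ ↦ hx)⟩
  obtain ⟨ℓ₀, hℓ₀, hmin₀⟩ := (isCompact_univ_pi fun n ↦ hLn n ▸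
    isCompact_setOf_sum_eq_and_forall_le_le _ _ _).exists_isMinOn
      (Set.univ_pi_nonempty_iff.2 hLnNonempty) (continuous_hpPotential a1 a2 α ω lhat).continuousOn
  refine ⟨⟨ℓ₀, hmin_NE ℓ₀ hℓ₀ hmin₀, fun ℓ hℓ ↦ ?_⟩,
    fun ℓ hℓL ↦ ⟨fun hℓ ↦ ⟨fun x hx ↦ ?_, fun x hx hxℓ ↦ ?_⟩, fun h ↦ hmin_NE ℓ hℓL h.1⟩⟩
  · by_contra hne
    exact (hNE_lt ℓ hℓ ℓ₀ hℓ₀ (Ne.symm hne)).not_ge (hmin₀ ((hNE_iff ℓ).1 hℓ).1)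
  · rcases eq_or_ne x ℓ with rfl | hne
    exacts [le_rfl, (hNE_lt ℓ hℓ x hx hne).le]
  · by_contra hne
    exact (hNE_lt ℓ hℓ x hx hne).ne' hxℓ

/-- With quadratic per-period costs (`a_{2,h} > 0`), nonempty
feasible sets and `α ∈ [0,1]`, the hourly-proportional game has exactly one
Nash equilibrium, and a feasible profile is a Nash equilibrium iff it is the
unique minimizer of the potential `W^HP_α` over `L`. -/
theorem hp_unique_NE_potential_minimizer
    (N H : ℕ)
    (En : Fin N → ℝ) (hEn : ∀ n, 0 < En n)
    (ω : Fin N → ℝ) (hω : ∀ n, 0 < ω n)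
    (lhat : Fin N → Fin H → ℝ)
    (lb ub : Fin N → Fin H → ℝ)
    (hlb : ∀ n h, 0 ≤ lb n h) (hbnds : ∀ n h, lb n h ≤ ub n h)
    (a1 a2 : Fin H → ℝ) (ha2 : ∀ h, 0 < a2 h)
    (α : ℝ) (hα : α ∈ Set.Icc (0 : ℝ) 1)
    (Ln : Fin N → Set (Fin H → ℝ))
    (hLn : ∀ n, Ln n =
      {x | (∑ h, x h) = En n ∧ ∀ h, lb n h ≤ x h ∧ x h ≤ ub n h})
    (hLnNonempty : ∀ n, (Ln n).Nonempty)
    (L : Set (Fin N → Fin H → ℝ))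
    (hL : L = {ℓ | ∀ n, ℓ n ∈ Ln n})
    (f : Fin N → (Fin N → Fin H → ℝ) → ℝ)
    (hf : ∀ n ℓ, f n ℓ =
      (1 - α) * ∑ h, ℓ n h * (a1 h + a2 h * (∑ m, ℓ m h))
        + α * (ω n * ∑ h, (ℓ n h - lhat n h) ^ 2))
    (W : (Fin N → Fin H → ℝ) → ℝ)
    (hW : ∀ ℓ, W ℓ =
      (1 - α) * ∑ h, (a2 h / 2 * ((∑ m, ℓ m h) ^ 2 + ∑ n, (ℓ n h) ^ 2)
          + a1 h * (∑ m, ℓ m h))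
        + α * ∑ n, ω n * ∑ h, (ℓ n h - lhat n h) ^ 2)
    (isNE : (Fin N → Fin H → ℝ) → Prop)
    (hNE : ∀ ℓ, isNE ℓ ↔ ℓ ∈ L ∧
      ∀ n, ∀ x ∈ Ln n, f n ℓ ≤ f n (Function.update ℓ n x)) :
    (∃! ℓ, isNE ℓ) ∧
      (∀ ℓ ∈ L, (isNE ℓ ↔
        ((∀ x ∈ L, W ℓ ≤ W x) ∧ (∀ x ∈ L, W x = W ℓ → x = ℓ)))) :=
  hp_unique_NE_potential_minimizer_general N H En ω hω lhat lb ub a1 a2 ha2 α hα Ln hLn hLnNonempty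
    L hL f hf W hW isNE hNE
end

section
/- In the two-period framework, assume that for all n, ℓ̂_P^n/E_n + 1/2 ≥ ℓ̂_P/E. Then for every α ∈ (0,1], the daily-proportional game G^DP_α has a unique Nash equilibrium, given for each consumer n by ℓ_P^n = ℓ̂_P^n + (E_n/E)·((1−α)/2)·(ℓ̂_O − ℓ̂_P) and ℓ_O^n = E_n − ℓ_P^n. -/
/-!
Writing every load in terms of the peak loads `x_n` (the offpeak loads are `E_n - x_n`), the cost
of consumer `n` is a convex quadratic in its own `x_n`, whose derivative is the marginal
`G_n(x) = 2 (1-α) (E_n/E) (2 ∑ x - E) + 4 α (x_n - ℓ̂_P^n)`. The stated profile `x*` solves `G_n = 0`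
for every `n` and lies in the feasible box, so it is an equilibrium. At any equilibrium `x` the
first-order conditions give `(x*_n - x_n) G_n(x) ≥ 0`; dividing by `E_n` turns the game into a
potential game, and summing over `n` gives `(1-α)/E (∑ δ)^2 + ∑ α/E_n δ_n^2 ≤ 0` for
`δ = x* - x`, whence `δ = 0`.
-/

open Filter Topology Finset

theorem Fintype.sum_update_eq_add_sub {ι M : Type*} [Fintype ι] [DecidableEq ι] [AddCommGroup M]
    (g : ι → M) (i : ι) (b : M) :
    ∑ j, Function.update g i b j = ∑ j, g j + (b - g i) := by
  rw [Finset.sum_update_of_mem (mem_univ i), ← Finset.add_sum_erase _ _ (mem_univ i),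
    Finset.sdiff_singleton_eq_erase]
  abel

theorem nonneg_of_forall_mem_Ioc_nonneg_add_mul {g k : ℝ}
    (h : ∀ t ∈ Set.Ioc (0 : ℝ) 1, 0 ≤ g + t * k) : 0 ≤ g := by
  have hlim : Tendsto (fun t : ℝ => g + t * k) (𝓝[>] 0) (𝓝 g) := by
    have : Continuous fun t : ℝ => g + t * k := by fun_prop
    simpa using (this.tendsto 0).mono_left nhdsWithin_le_nhds
  exact ge_of_tendsto hlim (eventually_of_mem (Ioc_mem_nhdsGT one_pos) h)

theorem Convex.sub_mul_nonneg_of_forall_le_sub_mul_add_sq {s : Set ℝ} (hs : Convex ℝ s)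
    {x z G κ : ℝ} (hx : x ∈ s) (hz : z ∈ s)
    (h : ∀ y ∈ s, 0 ≤ (y - x) * G + κ * (y - x) ^ 2) : 0 ≤ (z - x) * G := by
  refine nonneg_of_forall_mem_Ioc_nonneg_add_mul (k := κ * (z - x) ^ 2) fun t ht => ?_
  have hy := h _ (hs.add_smul_sub_mem hx hz ⟨ht.1.le, ht.2⟩)
  have : 0 ≤ t * ((z - x) * G + t * (κ * (z - x) ^ 2)) := by
    simp only [smul_eq_mul, add_sub_cancel_left] at hy
    linarith
  exact nonneg_of_mul_nonneg_right this ht.1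

theorem eq_zero_of_forall_mul_sum_mul_add_mul_sq_nonpos {ι : Type*} [Fintype ι] {c : ℝ}
    (hc : 0 ≤ c) {a δ : ι → ℝ} (ha : ∀ i, 0 < a i)
    (h : ∀ i, c * (∑ j, δ j) * δ i + a i * δ i ^ 2 ≤ 0) : δ = 0 := by
  have hsum : c * (∑ j, δ j) ^ 2 + ∑ i, a i * δ i ^ 2 ≤ 0 := by
    calc c * (∑ j, δ j) ^ 2 + ∑ i, a i * δ i ^ 2
        = ∑ i, (c * (∑ j, δ j) * δ i + a i * δ i ^ 2) := by
          rw [sum_add_distrib, ← mul_sum]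
          ring
      _ ≤ 0 := sum_nonpos fun i _ => h i
  have hterm : ∀ i ∈ univ, 0 ≤ a i * δ i ^ 2 := fun i _ => mul_nonneg (ha i).le (sq_nonneg _)
  have hzero := (sum_eq_zero_iff_of_nonneg hterm).1
    (le_antisymm (by linarith [mul_nonneg hc (sq_nonneg (∑ j, δ j))]) (sum_nonneg hterm))
  funext i
  simpa [(ha i).ne'] using hzero i (mem_univ i)

noncomputable def dpCost {ι : Type*} [Fintype ι] [DecidableEq ι] (En lhP lhO : ι → ℝ) (E α : ℝ)
    (n : ι) (lP lO : ι → ℝ) : ℝ :=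
  (1 - α) * (En n / E) * ((∑ m, lP m) ^ 2 + (∑ m, lO m) ^ 2)
    + α * ((lP n - lhP n) ^ 2 + (lO n - lhO n) ^ 2)

def IsDPNash {ι : Type*} [Fintype ι] [DecidableEq ι] (En lhP lhO : ι → ℝ) (E α : ℝ)
    (lP lO : ι → ℝ) : Prop :=
  (∀ n, lP n + lO n = En n ∧ 0 ≤ lP n ∧ 0 ≤ lO n) ∧
    ∀ n xP xO, xP + xO = En n → 0 ≤ xP → 0 ≤ xO →
      dpCost En lhP lhO E α n lP lO ≤
        dpCost En lhP lhO E α n (Function.update lP n xP) (Function.update lO n xO)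

/-- Derivative of consumer `n`'s cost in its own peak load, offpeak loads being `E_m - ℓ_P^m`. -/
noncomputable def dpMarginal {ι : Type*} [Fintype ι] (En lhP : ι → ℝ) (E α : ℝ) (n : ι)
    (lP : ι → ℝ) : ℝ :=
  2 * (1 - α) * (En n / E) * (2 * ∑ m, lP m - E) + 4 * α * (lP n - lhP n)

noncomputable def dpEquilibriumPeak {ι : Type*} (En lhP : ι → ℝ) (E α LhP LhO : ℝ) (n : ι) : ℝ :=
  lhP n + (En n / E) * ((1 - α) / 2) * (LhO - LhP)

section DailyProportional

variable {ι : Type*} {En lhP lhO : ι → ℝ} {E α : ℝ}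

theorem dpEquilibriumPeak_mem_Icc (hα : α ∈ Set.Ioc 0 1) (hE0 : 0 < E) {LhP LhO : ℝ}
    (hsum : LhP + LhO = E) (hpeak : LhO ≤ LhP) {n : ι} (hEn : 0 < En n)
    (hlhP : lhP n ≤ En n) (hassum : lhP n / En n + 1 / 2 ≥ LhP / E) :
    dpEquilibriumPeak En lhP E α LhP LhO n ∈ Set.Icc 0 (En n) := by
  have hw : 0 ≤ En n / E := by positivity
  have hD : 0 ≤ En n / E * (LhP - LhO) := mul_nonneg hw (by linarith)
  have hlow : En n / E * (LhP - LhO) / 2 ≤ lhP n := by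
    have h := mul_le_mul_of_nonneg_left hassum hEn.le
    rw [mul_add, mul_div_cancel₀ _ hEn.ne'] at h
    have : En n * (LhP / E) - En n * (1 / 2) = En n / E * (LhP - LhO) / 2 := by
      rw [show LhO = E - LhP by linarith]
      field_simp
      ring
    linarith
  constructor <;> simp only [dpEquilibriumPeak] <;> nlinarith [hα.1, hα.2]

variable [Fintype ι]

theorem dpMarginal_sub_dpMarginal (n : ι) (lP lP' : ι → ℝ) :
    dpMarginal En lhP E α n lP - dpMarginal En lhP E α n lP'
      = -4 * ((1 - α) * (En n / E) * ∑ m, (lP' m - lP m) + α * (lP' n - lP n)) := by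
  simp only [dpMarginal, sum_sub_distrib]
  ring

theorem eq_of_forall_sub_mul_dpMarginal_nonneg (hEn : ∀ n, 0 < En n) (hE0 : 0 ≤ E)
    (hα : α ∈ Set.Ioc 0 1) {lP lP' : ι → ℝ} (hG' : ∀ n, dpMarginal En lhP E α n lP' = 0)
    (h : ∀ n, 0 ≤ (lP' n - lP n) * dpMarginal En lhP E α n lP) : lP = lP' := by
  suffices hδ : lP' - lP = 0 from (sub_eq_zero.1 hδ).symm
  refine eq_zero_of_forall_mul_sum_mul_add_mul_sq_nonpos (c := (1 - α) / E)
    (div_nonneg (by linarith [hα.2]) hE0) (a := fun n => α / En n)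
    (fun n => div_pos hα.1 (hEn n)) fun n => ?_
  have hn : 0 ≤ (lP' n - lP n) *
      (dpMarginal En lhP E α n lP - dpMarginal En lhP E α n lP') := by
    rw [hG' n, sub_zero]
    exact h n
  rw [dpMarginal_sub_dpMarginal] at hn
  have hEn' := (hEn n).ne'
  -- dividing player `n`'s condition by `E_n` makes the aggregate coefficient `(1-α)/E` common
  have hscale : (1 - α) / E * (∑ m, (lP' - lP) m) * (lP' - lP) n + α / En n * (lP' - lP) n ^ 2
      = -((lP' n - lP n) * (-4 * ((1 - α) * (En n / E) * ∑ m, (lP' m - lP m)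
          + α * (lP' n - lP n)))) / (4 * En n) := by
    simp only [Pi.sub_apply]
    field_simp
  rw [hscale, neg_div, neg_nonpos]
  exact div_nonneg hn (by linarith [hEn n])

theorem dpMarginal_dpEquilibriumPeak (hE : E = ∑ m, En m) (hE0 : 0 < E) {LhP LhO : ℝ}
    (hLhP : LhP = ∑ m, lhP m) (hsum : LhP + LhO = E) (n : ι) :
    dpMarginal En lhP E α n (dpEquilibriumPeak En lhP E α LhP LhO) = 0 := by
  have hS : ∑ m, dpEquilibriumPeak En lhP E α LhP LhO m = LhP + (1 - α) / 2 * (LhO - LhP) := by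
    simp only [dpEquilibriumPeak, sum_add_distrib, ← sum_mul, ← sum_div, ← hE, ← hLhP,
      div_self hE0.ne', one_mul]
  rw [dpMarginal, hS, dpEquilibriumPeak]
  linear_combination (2 * (1 - α) * (En n / E)) * hsum

variable [DecidableEq ι]

theorem dpCost_update_sub (hE : E = ∑ m, En m) {lP lO : ι → ℝ}
    (hl : ∀ m, lP m + lO m = En m) {n : ι} (hlh : lhP n + lhO n = En n) (y : ℝ) :
    dpCost En lhP lhO E α n (Function.update lP n y) (Function.update lO n (En n - y))
        - dpCost En lhP lhO E α n lP lO
      = (y - lP n) * dpMarginal En lhP E α n lP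
        + 2 * ((1 - α) * (En n / E) + α) * (y - lP n) ^ 2 := by
  have hlO : ∑ m, lO m = E - ∑ m, lP m := by
    rw [hE, ← sum_sub_distrib]
    exact sum_congr rfl fun m _ => by linarith [hl m]
  have hlOn : lO n = En n - lP n := by linarith [hl n]
  have hlhOn : lhO n = En n - lhP n := by linarith
  simp only [dpCost, dpMarginal, Fintype.sum_update_eq_add_sub, Function.update_self, hlO,
    hlOn, hlhOn]
  ring

theorem isDPNash_of_dpMarginal_eq_zero (hE : E = ∑ m, En m) (hE0 : 0 ≤ E) (hα : α ∈ Set.Icc 0 1)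
    (hlh : ∀ n, lhP n + lhO n = En n) {lP lO : ι → ℝ}
    (hl : ∀ n, lP n + lO n = En n ∧ 0 ≤ lP n ∧ 0 ≤ lO n)
    (hG : ∀ n, dpMarginal En lhP E α n lP = 0) : IsDPNash En lhP lhO E α lP lO := by
  refine ⟨hl, fun n xP xO hx _ _ => ?_⟩
  obtain rfl : xO = En n - xP := by linarith
  have hκ : 0 ≤ (1 - α) * (En n / E) + α := by
    have : 0 ≤ En n / E := div_nonneg (by linarith [hl n]) hE0
    nlinarith [hα.1, hα.2]
  have := dpCost_update_sub (α := α) hE (fun m => (hl m).1) (hlh n) xP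
  rw [hG n, mul_zero, zero_add] at this
  nlinarith [sq_nonneg (xP - lP n)]

theorem IsDPNash.sub_mul_dpMarginal_nonneg (hE : E = ∑ m, En m)
    (hlh : ∀ n, lhP n + lhO n = En n) {lP lO : ι → ℝ} (h : IsDPNash En lhP lhO E α lP lO)
    {n : ι} {z : ℝ} (hz : z ∈ Set.Icc 0 (En n)) :
    0 ≤ (z - lP n) * dpMarginal En lhP E α n lP := by
  obtain ⟨hl, hbest⟩ := h
  have hx : lP n ∈ Set.Icc 0 (En n) := ⟨(hl n).2.1, by linarith [hl n]⟩
  refine (convex_Icc _ _).sub_mul_nonneg_of_forall_le_sub_mul_add_sq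
    (κ := 2 * ((1 - α) * (En n / E) + α)) hx hz fun y hy => ?_
  have hbr := hbest n y (En n - y) (by ring) hy.1 (by linarith [hy.2])
  linarith [dpCost_update_sub (α := α) hE (fun m => (hl m).1) (hlh n) y]

end DailyProportional

theorem dp_two_period_unique_NE_general
    (N : ℕ)
    (En : Fin N → ℝ) (hEn : ∀ n, 0 < En n)
    (lhP lhO : Fin N → ℝ)
    (hlhO : ∀ n, 0 ≤ lhO n)
    (hlhsum : ∀ n, lhP n + lhO n = En n)
    (E LhP LhO : ℝ)
    (hE : E = ∑ n, En n) (hLhP : LhP = ∑ n, lhP n) (hLhO : LhO = ∑ n, lhO n)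
    (hpeak : LhO ≤ E / 2 ∧ E / 2 ≤ LhP)
    (hassum : ∀ n, lhP n / En n + 1 / 2 ≥ LhP / E)
    (α : ℝ) (hα : α ∈ Set.Ioc (0 : ℝ) 1)
    (f : Fin N → (Fin N → ℝ) → (Fin N → ℝ) → ℝ)
    (hf : ∀ n lP lO, f n lP lO =
      (1 - α) * (En n / E) * ((∑ m, lP m) ^ 2 + (∑ m, lO m) ^ 2)
        + α * ((lP n - lhP n) ^ 2 + (lO n - lhO n) ^ 2))
    (isNE : (Fin N → ℝ) → (Fin N → ℝ) → Prop)
    (hNE : ∀ lP lO, isNE lP lO ↔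
      ((∀ n, lP n + lO n = En n ∧ 0 ≤ lP n ∧ 0 ≤ lO n) ∧
        ∀ n xP xO, xP + xO = En n → 0 ≤ xP → 0 ≤ xO →
          f n lP lO ≤ f n (Function.update lP n xP) (Function.update lO n xO)))
    (eqP eqO : Fin N → ℝ)
    (heqP : ∀ n, eqP n = lhP n + (En n / E) * ((1 - α) / 2) * (LhO - LhP))
    (heqO : ∀ n, eqO n = En n - eqP n) :
    isNE eqP eqO ∧ ∀ lP lO, isNE lP lO → lP = eqP ∧ lO = eqO := by
  obtain rfl : f = dpCost En lhP lhO E α := by funext n lP lO; exact hf n lP lO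
  obtain rfl : isNE = IsDPNash En lhP lhO E α := by funext lP lO; exact propext (hNE lP lO)
  obtain rfl : eqP = dpEquilibriumPeak En lhP E α LhP LhO := funext heqP
  have hsum : LhP + LhO = E := by
    rw [hLhP, hLhO, hE, ← sum_add_distrib]
    exact sum_congr rfl fun n _ => hlhsum n
  have hEpos : ∀ n, 0 < E := fun n =>
    (hEn n).trans_le (hE ▸ single_le_sum (fun m _ => (hEn m).le) (mem_univ n))
  have hG : ∀ n, dpMarginal En lhP E α n (dpEquilibriumPeak En lhP E α LhP LhO) = 0 := fun n =>
    dpMarginal_dpEquilibriumPeak hE (hEpos n) hLhP hsum n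
  have hmem : ∀ n, dpEquilibriumPeak En lhP E α LhP LhO n ∈ Set.Icc 0 (En n) := fun n =>
    dpEquilibriumPeak_mem_Icc hα (hEpos n) hsum (hpeak.1.trans hpeak.2) (hEn n)
      (by linarith [hlhO n, hlhsum n]) (hassum n)
  have hfeas : ∀ n, dpEquilibriumPeak En lhP E α LhP LhO n + eqO n = En n ∧
      0 ≤ dpEquilibriumPeak En lhP E α LhP LhO n ∧ 0 ≤ eqO n := fun n => by
    rw [heqO n]
    exact ⟨by ring, (hmem n).1, sub_nonneg.2 (hmem n).2⟩
  have hEnonneg : 0 ≤ E := hE ▸ sum_nonneg fun n _ => (hEn n).le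
  refine ⟨isDPNash_of_dpMarginal_eq_zero hE hEnonneg ⟨hα.1.le, hα.2⟩ hlhsum hfeas hG,
    fun lP lO hNash => ?_⟩
  have hlP := eq_of_forall_sub_mul_dpMarginal_nonneg hEn hEnonneg hα hG fun n =>
    hNash.sub_mul_dpMarginal_nonneg hE hlhsum (hmem n)
  refine ⟨hlP, funext fun n => ?_⟩
  rw [heqO n, ← hlP]
  linarith [(hNash.1 n).1]

/-- In the two-period framework, under the assumption
`ℓ̂_P^n/E_n + 1/2 ≥ ℓ̂_P/E` for all `n`, for every `α ∈ (0,1]` the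
daily-proportional game has a unique Nash equilibrium, given explicitly. -/
theorem dp_two_period_unique_NE
    (N : ℕ)
    (En : Fin N → ℝ) (hEn : ∀ n, 0 < En n)
    (lhP lhO : Fin N → ℝ)
    (hlhP : ∀ n, 0 ≤ lhP n) (hlhO : ∀ n, 0 ≤ lhO n)
    (hlhsum : ∀ n, lhP n + lhO n = En n)
    (E LhP LhO : ℝ)
    (hE : E = ∑ n, En n) (hLhP : LhP = ∑ n, lhP n) (hLhO : LhO = ∑ n, lhO n)
    (hpeak : LhO ≤ E / 2 ∧ E / 2 ≤ LhP)
    (hassum : ∀ n, lhP n / En n + 1 / 2 ≥ LhP / E)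
    (α : ℝ) (hα : α ∈ Set.Ioc (0 : ℝ) 1)
    (f : Fin N → (Fin N → ℝ) → (Fin N → ℝ) → ℝ)
    (hf : ∀ n lP lO, f n lP lO =
      (1 - α) * (En n / E) * ((∑ m, lP m) ^ 2 + (∑ m, lO m) ^ 2)
        + α * ((lP n - lhP n) ^ 2 + (lO n - lhO n) ^ 2))
    (isNE : (Fin N → ℝ) → (Fin N → ℝ) → Prop)
    (hNE : ∀ lP lO, isNE lP lO ↔
      ((∀ n, lP n + lO n = En n ∧ 0 ≤ lP n ∧ 0 ≤ lO n) ∧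
        ∀ n xP xO, xP + xO = En n → 0 ≤ xP → 0 ≤ xO →
          f n lP lO ≤ f n (Function.update lP n xP) (Function.update lO n xO)))
    (eqP eqO : Fin N → ℝ)
    (heqP : ∀ n, eqP n = lhP n + (En n / E) * ((1 - α) / 2) * (LhO - LhP))
    (heqO : ∀ n, eqO n = En n - eqP n) :
    isNE eqP eqO ∧ ∀ lP lO, isNE lP lO → lP = eqP ∧ lO = eqO :=
  dp_two_period_unique_NE_general N En hEn lhP lhO hlhO hlhsum E LhP LhO hE hLhP hLhO hpeak hassum α
    hα f hf isNE hNE eqP eqO heqP heqO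
end

section
/- In the two-period framework, assume that for all n, 2(N−1)·ℓ̂_P^n ≥ (ℓ̂_P − ℓ̂_O) − E_n. Then for every α ∈ [0,1], the hourly-proportional game G^HP_α has a unique Nash equilibrium, given for each consumer n by ℓ_P^n = ℓ̂_P^n + ((1−α)/(2(1+α)))·( φ(α)·(ℓ̂_O − ℓ̂_P) + (ℓ̂_O^n − ℓ̂_P^n) ) and ℓ_O^n = E_n − ℓ_P^n, where φ(α) = 2α/((1+α)+(1−α)N). -/
private lemma quad_diff (α E Enn lhPn lhOn S p x : ℝ) (h : lhPn + lhOn = Enn) :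
    ((1-α)*(x*(S - p + x) + (Enn - x)*(E - S + p - x))
      + α*((x - lhPn)^2 + ((Enn - x) - lhOn)^2))
    - ((1-α)*(p*S + (Enn - p)*(E - S))
      + α*((p - lhPn)^2 + ((Enn - p) - lhOn)^2))
    = 2*(x-p)^2 + ((1-α)*(2*p + 2*S - Enn - E) + 4*α*(p - lhPn))*(x - p) := by
  have h' : lhOn = Enn - lhPn := by linarith
  subst h'
  ring

private lemma foc_of_min (B p lo hi : ℝ) (hlo : lo ≤ p) (hhi : p ≤ hi)
    (hmin : ∀ x, lo ≤ x → x ≤ hi → 0 ≤ 2*(x-p)^2 + B*(x-p)) :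
    ∀ y, lo ≤ y → y ≤ hi → 0 ≤ B*(y-p) := by
  intro y hy hy'
  by_contra hneg
  push_neg at hneg
  have hd0 : y - p ≠ 0 := by
    intro h
    rw [h, mul_zero] at hneg
    exact lt_irrefl 0 hneg
  set d := y - p with hd
  have hd2 : 0 < d^2 := by positivity
  set t : ℝ := min 1 (-(B*d)/(4*d^2)) with ht
  have htpos : 0 < t := lt_min one_pos (div_pos (by linarith) (by positivity))
  have ht1 : t ≤ 1 := min_le_left _ _
  have ht2 : t * (4*d^2) ≤ -(B*d) := (le_div_iff₀ (by positivity)).mp (min_le_right _ _)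
  have hx1 : lo ≤ p + t*d := by
    rcases le_or_gt 0 d with h | h
    · nlinarith
    · nlinarith
  have hx2 : p + t*d ≤ hi := by
    rcases le_or_gt 0 d with h | h
    · nlinarith
    · nlinarith
  have h1 := hmin (p + t*d) hx1 hx2
  have h2 : (p + t*d) - p = t*d := by ring
  rw [h2] at h1
  nlinarith [mul_le_mul_of_nonneg_left ht2 htpos.le, mul_pos (mul_pos htpos htpos) hd2]
set_option maxHeartbeats 1000000 in
/-- In the two-period framework, under the assumption
`2(N−1)·ℓ̂_P^n ≥ (ℓ̂_P − ℓ̂_O) − E_n` for all `n`, for every `α ∈ [0,1]` the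
hourly-proportional game has a unique Nash equilibrium, given explicitly. -/
theorem hp_two_period_unique_NE
    (N : ℕ)
    (En : Fin N → ℝ) (hEn : ∀ n, 0 < En n)
    (lhP lhO : Fin N → ℝ)
    (hlhP : ∀ n, 0 ≤ lhP n) (hlhO : ∀ n, 0 ≤ lhO n)
    (hlhsum : ∀ n, lhP n + lhO n = En n)
    (E LhP LhO : ℝ)
    (hE : E = ∑ n, En n) (hLhP : LhP = ∑ n, lhP n) (hLhO : LhO = ∑ n, lhO n)
    (hpeak : LhO ≤ E / 2 ∧ E / 2 ≤ LhP)
    (hassum : ∀ n, 2 * ((N : ℝ) - 1) * lhP n ≥ (LhP - LhO) - En n)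
    (α : ℝ) (hα : α ∈ Set.Icc (0 : ℝ) 1)
    (φ : ℝ → ℝ) (hφ : ∀ a, φ a = 2 * a / ((1 + a) + (1 - a) * (N : ℝ)))
    (f : Fin N → (Fin N → ℝ) → (Fin N → ℝ) → ℝ)
    (hf : ∀ n lP lO, f n lP lO =
      (1 - α) * (lP n * (∑ m, lP m) + lO n * (∑ m, lO m))
        + α * ((lP n - lhP n) ^ 2 + (lO n - lhO n) ^ 2))
    (isNE : (Fin N → ℝ) → (Fin N → ℝ) → Prop)
    (hNE : ∀ lP lO, isNE lP lO ↔
      ((∀ n, lP n + lO n = En n ∧ 0 ≤ lP n ∧ 0 ≤ lO n) ∧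
        ∀ n xP xO, xP + xO = En n → 0 ≤ xP → 0 ≤ xO →
          f n lP lO ≤ f n (Function.update lP n xP) (Function.update lO n xO)))
    (eqP eqO : Fin N → ℝ)
    (heqP : ∀ n, eqP n = lhP n +
      ((1 - α) / (2 * (1 + α))) * (φ α * (LhO - LhP) + (lhO n - lhP n)))
    (heqO : ∀ n, eqO n = En n - eqP n) :
    isNE eqP eqO ∧ ∀ lP lO, isNE lP lO → lP = eqP ∧ lO = eqO := by

  obtain ⟨hα0, hα1⟩ := hα
  obtain ⟨hpk1, hpk2⟩ := hpeak
  have h1α : (0:ℝ) < 1 + α := by linarith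
  have hNc : (0:ℝ) ≤ (N:ℝ) := Nat.cast_nonneg N
  have hD0 : (0:ℝ) < (1 + α) + (1 - α) * (N:ℝ) := by nlinarith
  have hD0' : ((1 + α) + (1 - α) * (N:ℝ)) ≠ 0 := ne_of_gt hD0
  have h1α' : (1 + α) ≠ 0 := ne_of_gt h1α
  have hELh : E = LhP + LhO := by
    rw [hE, hLhP, hLhO, ← Finset.sum_add_distrib]
    exact Finset.sum_congr rfl fun n _ => (hlhsum n).symm
  have hLhPO : LhO ≤ LhP := by linarith
  have hS : ∑ m, eqP m = LhP + ((1 - α) / (2 * (1 + α))) *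
      ((N:ℝ) * (φ α * (LhO - LhP)) + (LhO - LhP)) := by
    calc ∑ m, eqP m
        = (∑ m, lhP m) + (∑ _m : Fin N, ((1 - α) / (2 * (1 + α)) * (φ α * (LhO - LhP))))
          + ((1 - α) / (2 * (1 + α)) * ∑ m, lhO m
            - (1 - α) / (2 * (1 + α)) * ∑ m, lhP m) := by
          rw [Finset.mul_sum, Finset.mul_sum, ← Finset.sum_sub_distrib,
            ← Finset.sum_add_distrib, ← Finset.sum_add_distrib]
          exact Finset.sum_congr rfl fun m _ => by rw [heqP m]; ring
      _ = LhP + ((1 - α) / (2 * (1 + α))) *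
          ((N:ℝ) * (φ α * (LhO - LhP)) + (LhO - LhP)) := by
          rw [Finset.sum_const, Finset.card_univ, Fintype.card_fin, nsmul_eq_mul,
            ← hLhP, ← hLhO]
          ring
  have hFOC : ∀ n : Fin N, (1 - α) * (2 * eqP n + 2 * (∑ m, eqP m) - En n - E)
      + 4 * α * (eqP n - lhP n) = 0 := by
    intro n
    rw [hS, heqP n, hφ, hELh, ← hlhsum n]
    field_simp
    ring
  have hKey : ∀ n : Fin N, eqP n * (2 * (1 + α) * ((1 + α) + (1 - α) * (N:ℝ)))
      = (1 - α) * ((lhP n + lhO n) * ((1 + α) + (1 - α) * (N:ℝ)) - 2 * α * (LhP - LhO))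
        + 4 * α * ((1 + α) + (1 - α) * (N:ℝ)) * lhP n := by
    intro n
    rw [heqP n, hφ]
    field_simp
    ring
  have hbnd : ∀ n : Fin N, 0 ≤ eqP n ∧ eqP n ≤ En n := by
    intro n
    have hN1 : (1:ℝ) ≤ (N:ℝ) := by exact_mod_cast n.pos
    have has : (LhP - LhO) - En n ≤ 2 * ((N:ℝ) - 1) * lhP n := hassum n
    have hsn := hlhsum n
    have hp := hlhP n
    have ho := hlhO n
    have hpos : (0:ℝ) < 2 * (1 + α) * ((1 + α) + (1 - α) * (N:ℝ)) := by positivity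
    constructor
    · have h1 : 0 ≤ (1 - α) * ((lhP n + lhO n) * ((1 + α) + (1 - α) * (N:ℝ))
          - 2 * α * (LhP - LhO)) + 4 * α * ((1 + α) + (1 - α) * (N:ℝ)) * lhP n := by
        nlinarith [mul_nonneg (mul_nonneg (by linarith : (0:ℝ) ≤ 2*α) (by linarith : (0:ℝ) ≤ 1-α))
            (by linarith : (0:ℝ) ≤ (lhP n + lhO n) + 2*((N:ℝ)-1)*lhP n - (LhP - LhO)),
          mul_nonneg (mul_nonneg (by linarith : (0:ℝ) ≤ 1-α) (by linarith : (0:ℝ) ≤ lhP n + lhO n))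
            (by nlinarith : (0:ℝ) ≤ (1-α) + (1-α)*(N:ℝ)),
          mul_nonneg hα0 hp]
      by_contra hc
      push_neg at hc
      have hlt : eqP n * (2 * (1 + α) * ((1 + α) + (1 - α) * (N:ℝ))) < 0 :=
        mul_neg_of_neg_of_pos hc hpos
      linarith [hKey n, h1, hlt]
    · have h2 : (1 - α) * ((lhP n + lhO n) * ((1 + α) + (1 - α) * (N:ℝ))
          - 2 * α * (LhP - LhO)) + 4 * α * ((1 + α) + (1 - α) * (N:ℝ)) * lhP n
          ≤ En n * (2 * (1 + α) * ((1 + α) + (1 - α) * (N:ℝ))) := by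
        nlinarith [mul_nonneg (mul_nonneg (by linarith : (0:ℝ) ≤ 2*α) (by linarith : (0:ℝ) ≤ 1-α))
            (by linarith : (0:ℝ) ≤ LhP - LhO),
          mul_nonneg (mul_nonneg (by linarith : (0:ℝ) ≤ 4*α) hD0.le) ho,
          mul_nonneg (mul_nonneg (by linarith : (0:ℝ) ≤ 1-α) hD0.le)
            (by linarith : (0:ℝ) ≤ lhP n + lhO n)]
      by_contra hc
      push_neg at hc
      have hlt : En n * (2 * (1 + α) * ((1 + α) + (1 - α) * (N:ℝ)))
          < eqP n * (2 * (1 + α) * ((1 + α) + (1 - α) * (N:ℝ))) :=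
        mul_lt_mul_of_pos_right hc hpos
      linarith [hKey n, h2, hlt]
  have hupd : ∀ (g : Fin N → ℝ) (n : Fin N) (x : ℝ),
      ∑ m, Function.update g n x m = (∑ m, g m) - g n + x := by
    intro g n x
    rw [Finset.sum_update_of_mem (Finset.mem_univ n),
      Finset.sum_sdiff_eq_sub (Finset.subset_univ {n}), Finset.sum_singleton]
    ring
  have hSO : ∑ m, eqO m = E - ∑ m, eqP m := by
    rw [hE, ← Finset.sum_sub_distrib]
    exact Finset.sum_congr rfl fun m _ => by rw [heqO m]
  have hNEeq : isNE eqP eqO := by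
    rw [hNE]
    refine ⟨fun n => ⟨by rw [heqO n]; ring, (hbnd n).1, by
      rw [heqO n]; linarith [(hbnd n).2]⟩, ?_⟩
    intro n xP xO hsum hxP hxO
    have hxO' : xO = En n - xP := by linarith
    subst hxO'
    have e1 : f n (Function.update eqP n xP) (Function.update eqO n (En n - xP))
        = (1-α)*(xP*((∑ m, eqP m) - eqP n + xP)
            + (En n - xP)*(E - (∑ m, eqP m) + eqP n - xP))
          + α*((xP - lhP n)^2 + ((En n - xP) - lhO n)^2) := by
      rw [hf, hupd eqP n xP, hupd eqO n (En n - xP), Function.update_self,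
        Function.update_self, hSO, heqO n]
      ring
    have e2 : f n eqP eqO
        = (1-α)*(eqP n * (∑ m, eqP m) + (En n - eqP n)*(E - (∑ m, eqP m)))
          + α*((eqP n - lhP n)^2 + ((En n - eqP n) - lhO n)^2) := by
      rw [hf, hSO, heqO n]
    have hq := quad_diff α E (En n) (lhP n) (lhO n) (∑ m, eqP m) (eqP n) xP (hlhsum n)
    rw [← e1, ← e2] at hq
    have hz : ((1-α)*(2*eqP n + 2*(∑ m, eqP m) - En n - E)
        + 4*α*(eqP n - lhP n)) * (xP - eqP n) = 0 := by
      rw [hFOC n, zero_mul]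
    nlinarith [sq_nonneg (xP - eqP n), hq, hz]
  refine ⟨hNEeq, ?_⟩
  intro lP lO hne
  rw [hNE] at hne
  obtain ⟨hfeas, hopt⟩ := hne
  have hLO : ∑ m, lO m = E - ∑ m, lP m := by
    rw [hE, ← Finset.sum_sub_distrib]
    exact Finset.sum_congr rfl fun m _ => by linarith [(hfeas m).1]
  have hVI : ∀ n : Fin N, ∀ y, 0 ≤ y → y ≤ En n →
      0 ≤ ((1-α)*(2*lP n + 2*(∑ m, lP m) - En n - E) + 4*α*(lP n - lhP n)) * (y - lP n) := by
    intro n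
    have hlPn : lO n = En n - lP n := by linarith [(hfeas n).1]
    apply foc_of_min _ (lP n) 0 (En n) (hfeas n).2.1
      (by linarith [(hfeas n).2.2, (hfeas n).1])
    intro x hx0 hx1
    have h := hopt n x (En n - x) (by ring) hx0 (by linarith)
    have e1 : f n (Function.update lP n x) (Function.update lO n (En n - x))
        = (1-α)*(x*((∑ m, lP m) - lP n + x) + (En n - x)*(E - (∑ m, lP m) + lP n - x))
          + α*((x - lhP n)^2 + ((En n - x) - lhO n)^2) := by
      rw [hf, hupd lP n x, hupd lO n (En n - x), Function.update_self,
        Function.update_self, hLO, hlPn]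
      ring
    have e2 : f n lP lO
        = (1-α)*(lP n * (∑ m, lP m) + (En n - lP n)*(E - (∑ m, lP m)))
          + α*((lP n - lhP n)^2 + ((En n - lP n) - lhO n)^2) := by
      rw [hf, hLO, hlPn]
    have hq := quad_diff α E (En n) (lhP n) (lhO n) (∑ m, lP m) (lP n) x (hlhsum n)
    rw [← e1, ← e2] at hq
    linarith [h, hq]
  have hterm : ∀ n : Fin N,
      ((1-α)*(2*lP n + 2*(∑ m, lP m) - En n - E) + 4*α*(lP n - lhP n)) * (eqP n - lP n)
      = (-(2+2*α))*(lP n - eqP n)^2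
          + (-(2*(1-α)*((∑ m, lP m) - (∑ m, eqP m)))) * (lP n - eqP n) := by
    intro n
    linear_combination (eqP n - lP n) * hFOC n
  have h1 : 0 ≤ ∑ n, ((1-α)*(2*lP n + 2*(∑ m, lP m) - En n - E)
      + 4*α*(lP n - lhP n)) * (eqP n - lP n) :=
    Finset.sum_nonneg fun n _ => hVI n (eqP n) (hbnd n).1 (hbnd n).2
  have h2 : ∑ n, ((1-α)*(2*lP n + 2*(∑ m, lP m) - En n - E)
      + 4*α*(lP n - lhP n)) * (eqP n - lP n)
      = -((2+2*α)*(∑ n, (lP n - eqP n)^2)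
          + 2*(1-α)*((∑ m, lP m) - (∑ m, eqP m))^2) := by
    rw [Finset.sum_congr rfl fun n _ => hterm n]
    rw [Finset.sum_add_distrib, ← Finset.mul_sum, ← Finset.mul_sum, Finset.sum_sub_distrib]
    ring
  have hsq : 0 ≤ ∑ n, (lP n - eqP n)^2 := Finset.sum_nonneg fun n _ => sq_nonneg _
  have hD2 : 0 ≤ 2*(1-α)*((∑ m, lP m) - (∑ m, eqP m))^2 :=
    mul_nonneg (by linarith) (sq_nonneg _)
  have hT0 : ∑ n, (lP n - eqP n)^2 ≤ 0 := by
    nlinarith [h1, h2, hD2, mul_nonneg hα0 hsq]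
  have hT : ∑ n, (lP n - eqP n)^2 = 0 := le_antisymm hT0 hsq
  have heach : ∀ n : Fin N, lP n = eqP n := by
    intro n
    have h := (Finset.sum_eq_zero_iff_of_nonneg
      (fun m _ => sq_nonneg (lP m - eqP m))).mp hT n (Finset.mem_univ n)
    have h' : lP n - eqP n = 0 := by
      have := sq_eq_zero_iff.mp h
      exact this
    linarith
  constructor
  · funext n; exact heach n
  · funext n
    rw [heqO n]
    linarith [(hfeas n).1, heach n]
end

section
/- In the two-period framework, assume that for all n, ℓ̂_P^n/E_n + 1/2 ≥ ℓ̂_P/E, and let α ∈ (0,1]. If ℓ is a Nash equilibrium of the daily-proportional game G^DP_α, then the aggregated peak load at equilibrium satisfies ℓ_P = E/2 + α·(ℓ̂_P − ℓ̂_O)/2 (and hence ℓ_O = E/2 − α·(ℓ̂_P − ℓ̂_O)/2). -/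
set_option maxHeartbeats 1000000 in
/-- In the two-period framework, at any Nash equilibrium of the
daily-proportional game `G^DP_α` with `α ∈ (0,1]`, the aggregated peak load is
`E/2 + α (ℓ̂_P − ℓ̂_O)/2` and the offpeak load is `E/2 − α (ℓ̂_P − ℓ̂_O)/2`. -/
theorem dp_two_period_aggregate_load
    (N : ℕ)
    (En : Fin N → ℝ) (hEn : ∀ n, 0 < En n)
    (lhP lhO : Fin N → ℝ)
    (hlhP : ∀ n, 0 ≤ lhP n) (hlhO : ∀ n, 0 ≤ lhO n)
    (hlhsum : ∀ n, lhP n + lhO n = En n)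
    (E LhP LhO : ℝ)
    (hE : E = ∑ n, En n) (hLhP : LhP = ∑ n, lhP n) (hLhO : LhO = ∑ n, lhO n)
    (hpeak : LhO ≤ E / 2 ∧ E / 2 ≤ LhP)
    (hassum : ∀ n, lhP n / En n + 1 / 2 ≥ LhP / E)
    (α : ℝ) (hα : α ∈ Set.Ioc (0 : ℝ) 1)
    (f : Fin N → (Fin N → ℝ) → (Fin N → ℝ) → ℝ)
    (hf : ∀ n lP lO, f n lP lO =
      (1 - α) * (En n / E) * ((∑ m, lP m) ^ 2 + (∑ m, lO m) ^ 2)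
        + α * ((lP n - lhP n) ^ 2 + (lO n - lhO n) ^ 2))
    (lP lO : Fin N → ℝ)
    (hfeas : ∀ n, lP n + lO n = En n ∧ 0 ≤ lP n ∧ 0 ≤ lO n)
    (hNE : ∀ n xP xO, xP + xO = En n → 0 ≤ xP → 0 ≤ xO →
      f n lP lO ≤ f n (Function.update lP n xP) (Function.update lO n xO)) :
    (∑ n, lP n) = E / 2 + α * (LhP - LhO) / 2 ∧
      (∑ n, lO n) = E / 2 - α * (LhP - LhO) / 2 := by
  obtain ⟨hα0, hα1⟩ := hα
  rcases Nat.eq_zero_or_pos N with hN0 | hNpos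
  · subst hN0
    simp only [Finset.univ_eq_empty, Finset.sum_empty] at hE hLhP hLhO ⊢
    constructor <;> (rw [hE, hLhP, hLhO]; ring)
  have hNZ : NeZero N := ⟨by omega⟩
  have hEpos : 0 < E := by
    rw [hE]; exact Finset.sum_pos (fun n _ => hEn n) Finset.univ_nonempty
  have hEne : E ≠ 0 := ne_of_gt hEpos
  -- abbreviations
  set w : Fin N → ℝ := fun n => En n / E with hw_def
  set d : Fin N → ℝ := fun n =>
    (1 - α) * w n * ((∑ k, lP k) - (∑ k, lO k))
      + α * (2 * lP n - En n - lhP n + lhO n) with hd_def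
  have hwpos : ∀ n, 0 < w n := fun n => div_pos (hEn n) hEpos
  have hws : ∑ n, w n = 1 := by
    simp only [hw_def]
    rw [← Finset.sum_div, ← hE, div_self hEne]
  have hPO : (∑ n, lP n) + (∑ n, lO n) = E := by
    rw [hE, ← Finset.sum_add_distrib]
    exact Finset.sum_congr rfl fun n _ => (hfeas n).1
  have hLsum : LhP + LhO = E := by
    rw [hLhP, hLhO, hE, ← Finset.sum_add_distrib]
    exact Finset.sum_congr rfl fun n _ => hlhsum n
  have hΔ0 : 0 ≤ LhP - LhO := by linarith [hpeak.2]
  have hq : ∀ n, lO n = En n - lP n := fun n => by linarith [(hfeas n).1]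
  have hple : ∀ n, lP n ≤ En n := fun n => by linarith [(hfeas n).2.2, (hfeas n).1]
  -- the key variational inequality from the Nash property
  have key : ∀ (n : Fin N) (x : ℝ), 0 ≤ x → x ≤ En n →
      0 ≤ 2 * (x - lP n) * d n + (x - lP n) ^ 2 * (2 * ((1 - α) * w n + α)) := by
    intro n x hx hxE
    have h := hNE n x (En n - x) (by ring) hx (by linarith)
    rw [hf, hf] at h
    rw [Finset.sum_update_of_mem (Finset.mem_univ n),
        Finset.sum_update_of_mem (Finset.mem_univ n)] at h
    simp only [Function.update_self] at h
    rw [Finset.sum_eq_sum_sdiff_singleton_add (Finset.mem_univ n) lP,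
        Finset.sum_eq_sum_sdiff_singleton_add (Finset.mem_univ n) lO] at h
    rw [hq n] at h
    simp only [hd_def, hw_def]
    rw [Finset.sum_eq_sum_sdiff_singleton_add (Finset.mem_univ n) lP,
        Finset.sum_eq_sum_sdiff_singleton_add (Finset.mem_univ n) lO]
    rw [hq n]
    nlinarith [h]
  -- complementarity
  have hdpos : ∀ n, 0 < d n → lP n = 0 := by
    intro n hdn
    by_contra hne
    have hp : 0 < lP n := lt_of_le_of_ne (hfeas n).2.1 (Ne.symm hne)
    have hcpos : 0 < (1 - α) * w n + α := by
      have h1 : 0 ≤ (1 - α) * w n := mul_nonneg (by linarith) (hwpos n).le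
      linarith
    set c : ℝ := (1 - α) * w n + α with hc
    set m : ℝ := min (lP n) (d n / (2 * c)) with hm
    have hm0 : 0 < m := lt_min hp (div_pos hdn (by linarith))
    have hm1 : m ≤ lP n := min_le_left _ _
    have hm2 : m * (2 * c) ≤ d n := by
      have h := min_le_right (lP n) (d n / (2 * c))
      calc m * (2 * c) ≤ (d n / (2 * c)) * (2 * c) :=
            mul_le_mul_of_nonneg_right h (by linarith)
        _ = d n := div_mul_cancel₀ _ (by linarith)
    have hk := key n (lP n - m) (by linarith) (by linarith [hple n])
    nlinarith [hk, mul_le_mul_of_nonneg_left hm2 hm0.le, mul_pos hm0 hdn]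
  have hdneg : ∀ n, d n < 0 → lP n = En n := by
    intro n hdn
    by_contra hne
    have hp : lP n < En n := lt_of_le_of_ne (hple n) hne
    have hcpos : 0 < (1 - α) * w n + α := by
      have h1 : 0 ≤ (1 - α) * w n := mul_nonneg (by linarith) (hwpos n).le
      linarith
    set c : ℝ := (1 - α) * w n + α with hc
    set m : ℝ := min (En n - lP n) (-(d n) / (2 * c)) with hm
    have hm0 : 0 < m := lt_min (by linarith) (div_pos (by linarith) (by linarith))
    have hm1 : m ≤ En n - lP n := min_le_left _ _
    have hm2 : m * (2 * c) ≤ -(d n) := by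
      have h := min_le_right (En n - lP n) (-(d n) / (2 * c))
      calc m * (2 * c) ≤ (-(d n) / (2 * c)) * (2 * c) :=
            mul_le_mul_of_nonneg_right h (by linarith)
        _ = -(d n) := div_mul_cancel₀ _ (by linarith)
    have hk := key n (lP n + m) (by linarith [(hfeas n).2.1]) (by linarith)
    nlinarith [hk, mul_le_mul_of_nonneg_left hm2 hm0.le, mul_pos hm0 (neg_pos.mpr hdn)]
  -- the sum of the d n
  have hsum_d : ∑ n, d n = ((∑ n, lP n) - (∑ n, lO n)) - α * (LhP - LhO) := by
    have hstep : ∀ n, d n =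
        ((1 - α) * ((∑ k, lP k) - (∑ k, lO k))) * w n
          + ((2 * α) * lP n + ((-α) * En n + ((-α) * lhP n + α * lhO n))) := by
      intro n; simp only [hd_def]; ring
    rw [Finset.sum_congr rfl fun n _ => hstep n]
    rw [Finset.sum_add_distrib, ← Finset.mul_sum, hws, mul_one]
    rw [Finset.sum_add_distrib, ← Finset.mul_sum]
    rw [Finset.sum_add_distrib, ← Finset.mul_sum]
    rw [Finset.sum_add_distrib, ← Finset.mul_sum, ← Finset.mul_sum]
    rw [← hE, ← hLhP, ← hLhO]
    linear_combination α * hPO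
  -- the "peakier than average" consequence of hassum
  have key2 : ∀ n, w n * (LhP - LhO) ≤ 2 * lhP n := by
    intro n
    have h1 := hassum n
    have h2 : En n * (LhP / E) ≤ En n * (lhP n / En n + 1 / 2) :=
      mul_le_mul_of_nonneg_left h1 (hEn n).le
    have h3 : En n * (lhP n / En n) = lhP n :=
      by rw [← mul_div_assoc]; exact mul_div_cancel_left₀ _ (ne_of_gt (hEn n))
    have h4 : En n * (LhP / E) = w n * LhP := by simp only [hw_def]; ring
    have h5 : w n * E = En n := by simp only [hw_def]; field_simp
    have e1 : w n * (LhP - LhO) = 2 * (w n * LhP) - w n * E := by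
      linear_combination (-(w n)) * hLsum
    linarith [h2, h3, h4, h5, e1]
  -- d is nonnegative everywhere
  have hd_nonneg : ∀ n, 0 ≤ d n := by
    by_contra hc
    push_neg at hc
    obtain ⟨m, hm⟩ := hc
    have hpm := hdneg m hm
    have hdm : d m = (1 - α) * w m * ((∑ k, lP k) - (∑ k, lO k)) + 2 * α * lhO m := by
      simp only [hd_def]; rw [hpm]; linear_combination (-α) * hlhsum m
    have h1 : (1 - α) * w m * ((∑ k, lP k) - (∑ k, lO k)) < 0 := by
      have := mul_nonneg hα0.le (hlhO m)
      linarith [hdm, hm]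
    have hD : (∑ k, lP k) - (∑ k, lO k) < 0 := by
      by_contra hcon
      push_neg at hcon
      have : 0 ≤ (1 - α) * w m * ((∑ k, lP k) - (∑ k, lO k)) :=
        mul_nonneg (mul_nonneg (by linarith) (hwpos m).le) hcon
      linarith
    have hub : ∀ n, (1 - α) * w n * ((∑ k, lP k) - (∑ k, lO k)) ≤ d n := by
      intro n
      rcases lt_trichotomy (d n) 0 with h | h | h
      · have hpn := hdneg n h
        have hdn : d n = (1 - α) * w n * ((∑ k, lP k) - (∑ k, lO k)) + 2 * α * lhO n := by
          simp only [hd_def]; rw [hpn]; linear_combination (-α) * hlhsum n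
        have := mul_nonneg hα0.le (hlhO n)
        linarith
      · have hnn : 0 ≤ (1 - α) * w n := mul_nonneg (by linarith) (hwpos n).le
        nlinarith [mul_nonneg hnn (neg_nonneg.mpr hD.le)]
      · exfalso
        have hpn := hdpos n h
        have hdn : d n = (1 - α) * w n * ((∑ k, lP k) - (∑ k, lO k)) - 2 * α * lhP n := by
          simp only [hd_def]; rw [hpn]; linear_combination α * hlhsum n
        have h2 : 0 ≤ (1 - α) * w n := mul_nonneg (by linarith) (hwpos n).le
        nlinarith [mul_nonneg h2 (neg_nonneg.mpr hD.le), mul_nonneg hα0.le (hlhP n)]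
    have hsum_ge : ∑ n, (1 - α) * w n * ((∑ k, lP k) - (∑ k, lO k)) ≤ ∑ n, d n :=
      Finset.sum_le_sum fun n _ => hub n
    have hleft : ∑ n, (1 - α) * w n * ((∑ k, lP k) - (∑ k, lO k))
        = (1 - α) * ((∑ k, lP k) - (∑ k, lO k)) := by
      rw [← Finset.sum_mul, ← Finset.mul_sum, hws, mul_one]
    rw [hleft, hsum_d] at hsum_ge
    nlinarith [mul_pos hα0 (show (0:ℝ) < (LhP - LhO) - ((∑ k, lP k) - (∑ k, lO k)) by linarith)]
  -- d is nonpositive everywhere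
  have hd_nonpos : ∀ n, d n ≤ 0 := by
    by_contra hc
    push_neg at hc
    obtain ⟨m, hm⟩ := hc
    have hpm := hdpos m hm
    have hdm : d m = (1 - α) * w m * ((∑ k, lP k) - (∑ k, lO k)) - 2 * α * lhP m := by
      simp only [hd_def]; rw [hpm]; linear_combination α * hlhsum m
    have hkm : 0 < (1 - α) * ((∑ k, lP k) - (∑ k, lO k)) - α * (LhP - LhO) := by
      by_contra hcon
      push_neg at hcon
      have h1 : α * (w m * (LhP - LhO)) ≤ α * (2 * lhP m) :=
        mul_le_mul_of_nonneg_left (key2 m) hα0.le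
      have h2 : 0 ≤ w m * (-((1 - α) * ((∑ k, lP k) - (∑ k, lO k)) - α * (LhP - LhO))) :=
        mul_nonneg (hwpos m).le (by linarith)
      nlinarith [hdm, hm, h1, h2]
    have hD : 0 < (∑ k, lP k) - (∑ k, lO k) := by
      by_contra hcon
      push_neg at hcon
      have h1 : 0 ≤ α * (LhP - LhO) := mul_nonneg hα0.le hΔ0
      nlinarith [mul_nonneg (show (0:ℝ) ≤ 1 - α by linarith) (neg_nonneg.mpr hcon)]
    have hub : ∀ n, d n ≤ w n * ((1 - α) * ((∑ k, lP k) - (∑ k, lO k)) - α * (LhP - LhO)) := by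
      intro n
      rcases lt_trichotomy (d n) 0 with h | h | h
      · exfalso
        have hpn := hdneg n h
        have hdn : d n = (1 - α) * w n * ((∑ k, lP k) - (∑ k, lO k)) + 2 * α * lhO n := by
          simp only [hd_def]; rw [hpn]; linear_combination (-α) * hlhsum n
        have h2 : 0 ≤ (1 - α) * w n := mul_nonneg (by linarith) (hwpos n).le
        nlinarith [mul_nonneg h2 hD.le, mul_nonneg hα0.le (hlhO n)]
      · have := mul_pos (hwpos n) hkm
        linarith
      · have hpn := hdpos n h
        have hdn : d n = (1 - α) * w n * ((∑ k, lP k) - (∑ k, lO k)) - 2 * α * lhP n := by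
          simp only [hd_def]; rw [hpn]; linear_combination α * hlhsum n
        have h1 : α * (w n * (LhP - LhO)) ≤ α * (2 * lhP n) :=
          mul_le_mul_of_nonneg_left (key2 n) hα0.le
        nlinarith [h1]
    have hsum_le : ∑ n, d n
        ≤ ∑ n, w n * ((1 - α) * ((∑ k, lP k) - (∑ k, lO k)) - α * (LhP - LhO)) :=
      Finset.sum_le_sum fun n _ => hub n
    have hright : ∑ n, w n * ((1 - α) * ((∑ k, lP k) - (∑ k, lO k)) - α * (LhP - LhO))
        = (1 - α) * ((∑ k, lP k) - (∑ k, lO k)) - α * (LhP - LhO) := by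
      rw [← Finset.sum_mul, hws, one_mul]
    rw [hsum_d, hright] at hsum_le
    nlinarith [mul_pos hα0 hD]
  have hdz : ∑ n, d n = 0 :=
    Finset.sum_eq_zero fun n _ => le_antisymm (hd_nonpos n) (hd_nonneg n)
  rw [hdz] at hsum_d
  constructor <;> linarith [hsum_d.symm, hPO]
end

section
/- In the two-period framework, assume that for all n, 2(N−1)·ℓ̂_P^n ≥ (ℓ̂_P − ℓ̂_O) − E_n, and let α ∈ [0,1]. If ℓ is a Nash equilibrium of the hourly-proportional game G^HP_α, then the aggregated peak load at equilibrium satisfies ℓ_P = E/2 + φ(α)·(ℓ̂_P − ℓ̂_O)/2, where φ(α) = 2α/((1+α)+(1−α)N) (and hence ℓ_O = E/2 − φ(α)·(ℓ̂_P − ℓ̂_O)/2). -/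
set_option maxHeartbeats 1600000 in
/-- In the two-period framework, at any Nash equilibrium of the
hourly-proportional game `G^HP_α` with `α ∈ [0,1]`, the aggregated peak load is
`E/2 + φ(α)(ℓ̂_P − ℓ̂_O)/2` and the offpeak load is `E/2 − φ(α)(ℓ̂_P − ℓ̂_O)/2`. -/
theorem hp_two_period_aggregate_load
    (N : ℕ)
    (En : Fin N → ℝ) (hEn : ∀ n, 0 < En n)
    (lhP lhO : Fin N → ℝ)
    (hlhP : ∀ n, 0 ≤ lhP n) (hlhO : ∀ n, 0 ≤ lhO n)
    (hlhsum : ∀ n, lhP n + lhO n = En n)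
    (E LhP LhO : ℝ)
    (hE : E = ∑ n, En n) (hLhP : LhP = ∑ n, lhP n) (hLhO : LhO = ∑ n, lhO n)
    (hpeak : LhO ≤ E / 2 ∧ E / 2 ≤ LhP)
    (hassum : ∀ n, 2 * ((N : ℝ) - 1) * lhP n ≥ (LhP - LhO) - En n)
    (α : ℝ) (hα : α ∈ Set.Icc (0 : ℝ) 1)
    (φ : ℝ → ℝ) (hφ : ∀ a, φ a = 2 * a / ((1 + a) + (1 - a) * (N : ℝ)))
    (f : Fin N → (Fin N → ℝ) → (Fin N → ℝ) → ℝ)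
    (hf : ∀ n lP lO, f n lP lO =
      (1 - α) * (lP n * (∑ m, lP m) + lO n * (∑ m, lO m))
        + α * ((lP n - lhP n) ^ 2 + (lO n - lhO n) ^ 2))
    (lP lO : Fin N → ℝ)
    (hfeas : ∀ n, lP n + lO n = En n ∧ 0 ≤ lP n ∧ 0 ≤ lO n)
    (hNE : ∀ n xP xO, xP + xO = En n → 0 ≤ xP → 0 ≤ xO →
      f n lP lO ≤ f n (Function.update lP n xP) (Function.update lO n xO)) :
    (∑ n, lP n) = E / 2 + φ α * (LhP - LhO) / 2 ∧
      (∑ n, lO n) = E / 2 - φ α * (LhP - LhO) / 2 := by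
  obtain ⟨hα0, hα1⟩ := hα
  have hNc : (0:ℝ) ≤ (N:ℝ) := Nat.cast_nonneg N
  have hKpos : (0:ℝ) < (1 + α) + (1 - α) * (N:ℝ) := by nlinarith
  have hcK : φ α * ((1 + α) + (1 - α) * (N:ℝ)) = 2 * α := by
    rw [hφ]; field_simp
  have hc0 : 0 ≤ φ α := by
    rw [hφ]; exact div_nonneg (by linarith) hKpos.le
  have hΔ : 0 ≤ LhP - LhO := by linarith [hpeak.1, hpeak.2]
  have h1α : (0:ℝ) < 2 * (1 + α) := by linarith
  -- the candidate equilibrium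
  obtain ⟨y, hyval⟩ : ∃ y : Fin N → ℝ, ∀ n, 2 * (1 + α) * y n
      = (1 - α) * (En n - φ α * (LhP - LhO)) + 4 * α * lhP n := by
    refine ⟨fun n => ((1 - α) * (En n - φ α * (LhP - LhO)) + 4 * α * lhP n)
      / (2 * (1 + α)), fun n => ?_⟩
    field_simp
  have hpE : ∀ n, lhP n ≤ En n := fun n => by
    have := hlhO n; have := hlhsum n; linarith
  -- feasibility of the candidate
  have hy0 : ∀ n, 0 ≤ y n := by
    intro n
    have hge := hassum n
    have h1 : 0 ≤ 2 * α * (1 - α) * (En n + 2 * ((N:ℝ) - 1) * lhP n - (LhP - LhO)) := by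
      apply mul_nonneg (by nlinarith) (by linarith)
    have h2 : 0 ≤ (1 - α)^2 * (1 + (N:ℝ)) * En n := by
      apply mul_nonneg (by nlinarith) (hEn n).le
    have h3 : 0 ≤ 8 * α * lhP n := by nlinarith [hlhP n]
    have hkey : ((1 - α) * (En n - φ α * (LhP - LhO)) + 4 * α * lhP n)
          * ((1 + α) + (1 - α) * (N:ℝ))
        = (1 - α)^2 * (1 + (N:ℝ)) * En n + 8 * α * lhP n
          + 2 * α * (1 - α) * (En n + 2 * ((N:ℝ) - 1) * lhP n - (LhP - LhO)) := by
      linear_combination (-(1 - α) * (LhP - LhO)) * hcK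
    have hKA : 0 ≤ ((1 - α) * (En n - φ α * (LhP - LhO)) + 4 * α * lhP n)
          * ((1 + α) + (1 - α) * (N:ℝ)) := by rw [hkey]; linarith
    have hA : 0 ≤ (1 - α) * (En n - φ α * (LhP - LhO)) + 4 * α * lhP n :=
      (mul_nonneg_iff_of_pos_right hKpos).mp hKA
    have h9 : 0 ≤ 2 * (1 + α) * y n := by rw [hyval n]; exact hA
    exact (mul_nonneg_iff_of_pos_left h1α).mp h9
  have hyE : ∀ n, y n ≤ En n := by
    intro n
    have h4 : 0 ≤ (1 - α) * (φ α * (LhP - LhO)) := by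
      exact mul_nonneg (by linarith) (mul_nonneg hc0 hΔ)
    have h5 : 0 ≤ 4 * α * (En n - lhP n) := by
      exact mul_nonneg (by linarith) (by linarith [hpE n])
    have h6 : 0 ≤ (1 - α) * En n := mul_nonneg (by linarith) (hEn n).le
    have h7 : 0 ≤ (En n - y n) * (2 * (1 + α)) := by
      have := hyval n; nlinarith [this]
    have := (mul_nonneg_iff_of_pos_right h1α).mp h7
    linarith
  -- sums of updates
  have hsum_upd : ∀ (g : Fin N → ℝ) (n : Fin N) (v : ℝ),
      ∑ m, Function.update g n v m = (∑ m, g m) - g n + v := by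
    intro g n v
    rw [Finset.sum_update_of_mem (Finset.mem_univ n)]
    rw [Finset.sum_sdiff_eq_sub (Finset.singleton_subset_iff.mpr (Finset.mem_univ n))]
    simp; ring
  have hSPSO : (∑ m, lP m) + (∑ m, lO m) = E := by
    rw [hE, ← Finset.sum_add_distrib]
    exact Finset.sum_congr rfl fun n _ => (hfeas n).1
  have hEhat : LhP + LhO = E := by
    rw [hE, hLhP, hLhO, ← Finset.sum_add_distrib]
    exact Finset.sum_congr rfl fun n _ => hlhsum n
  -- the NE inequality against the candidate, per player
  have hC : ∀ n, 0 ≤ (y n - lP n) *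
      ((1 - α) * (2 * y n - En n + ((∑ m, lP m) - (∑ m, lO m)))
        + 2 * α * (y n + lP n - 2 * lhP n)) := by
    intro n
    obtain ⟨hfe, hP0, hO0⟩ := hfeas n
    have h := hNE n (y n) (En n - y n) (by ring) (hy0 n) (by linarith [hyE n])
    rw [hf, hf] at h
    rw [hsum_upd lP n (y n), hsum_upd lO n (En n - y n)] at h
    simp only [Function.update_self] at h
    have hlo : lO n = En n - lP n := by linarith
    have hlho : lhO n = En n - lhP n := by linarith [hlhsum n]
    rw [hlo, hlho] at h
    have h' := sub_nonneg.mpr h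
    ring_nf at h' ⊢
    linarith [h']
  -- first order condition for the candidate
  have hFOC : ∀ n, (1 - α) * (2 * y n - En n + φ α * (LhP - LhO))
      + 4 * α * (y n - lhP n) = 0 := by
    intro n
    have := hyval n
    linarith [this]
  -- aggregate of the candidate
  have hTPsum : 2 * (1 + α) * (∑ n, y n)
      = (1 - α) * (E - (N:ℝ) * (φ α * (LhP - LhO))) + 4 * α * LhP := by
    rw [Finset.mul_sum]
    have hcg : ∀ n ∈ Finset.univ, 2 * (1 + α) * y n
        = ((1 - α) * (En n - φ α * (LhP - LhO)) + 4 * α * lhP n) := fun n _ => hyval n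
    rw [Finset.sum_congr rfl hcg]
    rw [Finset.sum_add_distrib, ← Finset.mul_sum, ← Finset.mul_sum,
      Finset.sum_sub_distrib, Finset.sum_const, Finset.card_univ, Fintype.card_fin,
      ← hE, ← hLhP]
    ring
  have hDD : 2 * (∑ n, y n) - E = φ α * (LhP - LhO) := by
    have hne : (1 + α) ≠ 0 := by positivity
    have key : (1 + α) * (2 * (∑ n, y n) - E - φ α * (LhP - LhO)) = 0 := by
      linear_combination hTPsum - (LhP - LhO) * hcK + 2 * α * hEhat
    rcases mul_eq_zero.mp key with h | h
    · exact absurd h hne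
    · linarith
  -- combine: per-player reduced inequality
  have hC2 : ∀ n, 0 ≤ (y n - lP n) *
      ((1 - α) * (((∑ m, lP m) - (∑ m, lO m)) - φ α * (LhP - LhO))
        - 2 * α * (y n - lP n)) := by
    intro n
    have heq : (y n - lP n) *
        ((1 - α) * (((∑ m, lP m) - (∑ m, lO m)) - φ α * (LhP - LhO))
          - 2 * α * (y n - lP n))
        = (y n - lP n) *
        ((1 - α) * (2 * y n - En n + ((∑ m, lP m) - (∑ m, lO m)))
          + 2 * α * (y n + lP n - 2 * lhP n)) := by
      linear_combination (-(y n - lP n)) * hFOC n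
    rw [heq]; exact hC n
  -- sum it
  have hQ0 : 0 ≤ ∑ n, (y n - lP n)^2 := Finset.sum_nonneg fun n _ => sq_nonneg _
  have hsum2 : 0 ≤ ((1 - α) * (((∑ m, lP m) - (∑ m, lO m)) - φ α * (LhP - LhO)))
        * ((∑ n, y n) - (∑ n, lP n)) - 2 * α * ∑ n, (y n - lP n)^2 := by
    have h := Finset.sum_nonneg (s := Finset.univ) (fun n _ => hC2 n)
    have hexp : (∑ n, (y n - lP n) *
        ((1 - α) * (((∑ m, lP m) - (∑ m, lO m)) - φ α * (LhP - LhO))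
          - 2 * α * (y n - lP n)))
        = ((1 - α) * (((∑ m, lP m) - (∑ m, lO m)) - φ α * (LhP - LhO)))
            * ((∑ n, y n) - (∑ n, lP n)) - 2 * α * ∑ n, (y n - lP n)^2 := by
      have hcg : ∀ n ∈ Finset.univ, (y n - lP n) *
          ((1 - α) * (((∑ m, lP m) - (∑ m, lO m)) - φ α * (LhP - LhO))
            - 2 * α * (y n - lP n))
          = ((1 - α) * (((∑ m, lP m) - (∑ m, lO m)) - φ α * (LhP - LhO)))
              * (y n - lP n) - 2 * α * (y n - lP n)^2 := fun n _ => by ring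
      rw [Finset.sum_congr rfl hcg, Finset.sum_sub_distrib, ← Finset.mul_sum,
        ← Finset.mul_sum, Finset.sum_sub_distrib]
    rw [hexp] at h
    exact h
  -- final: deduce aggregate equality
  have hfin : 0 ≤ -2 * (1 - α) * ((∑ n, y n) - (∑ n, lP n))^2
      - 2 * α * ∑ n, (y n - lP n)^2 := by
    have hrw : ((∑ m, lP m) - (∑ m, lO m)) - φ α * (LhP - LhO)
        = -2 * ((∑ n, y n) - (∑ n, lP n)) := by
      have := hDD; linarith [hSPSO]
    calc (0:ℝ) ≤ _ := hsum2
      _ = -2 * (1 - α) * ((∑ n, y n) - (∑ n, lP n))^2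
          - 2 * α * ∑ n, (y n - lP n)^2 := by rw [hrw]; ring
  have hSeq : (∑ n, y n) = (∑ n, lP n) := by
    by_cases hone : α = 1
    · subst hone
      have hQ : (∑ n, (y n - lP n)^2) = 0 := by linarith [hfin]
      have hz := (Finset.sum_eq_zero_iff_of_nonneg
        (fun n _ => sq_nonneg (y n - lP n))).mp hQ
      have hz2 : (∑ n, (y n - lP n)) = 0 :=
        Finset.sum_eq_zero fun n hn => by
          have := sq_eq_zero_iff.mp (hz n hn); linarith
      rw [Finset.sum_sub_distrib] at hz2
      linarith
    · have hlt : α < 1 := lt_of_le_of_ne hα1 hone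
      have h8 : (1 - α) * ((∑ n, y n) - (∑ n, lP n))^2 ≤ 0 := by nlinarith [hfin, hQ0]
      have hsq : ((∑ n, y n) - (∑ n, lP n))^2 = 0 := by
        nlinarith [sq_nonneg ((∑ n, y n) - (∑ n, lP n))]
      have := sq_eq_zero_iff.mp hsq
      linarith
  constructor
  · linarith [hDD, hSeq]
  · linarith [hDD, hSeq, hSPSO]
end

section
/- In the two-period framework, assume that for all n, 2(N−1)·ℓ̂_P^n ≥ (ℓ̂_P − ℓ̂_O) − E_n, and let α ∈ [0,1]. If ℓ is a Nash equilibrium of the hourly-proportional game G^HP_α, then the total system cost at equilibrium equals C(ℓ) = (1/2)·( E² + φ(α)²·(ℓ̂_P − ℓ̂_O)² ), where φ(α) = 2α/((1+α)+(1−α)N). -/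
set_option maxHeartbeats 1600000 in
/-- In the two-period framework, at any Nash equilibrium of the
hourly-proportional game `G^HP_α` with `α ∈ [0,1]`, the total system cost
equals `(1/2)(E² + φ(α)²(ℓ̂_P − ℓ̂_O)²)`. -/
theorem hp_two_period_system_cost
    (N : ℕ)
    (En : Fin N → ℝ) (hEn : ∀ n, 0 < En n)
    (lhP lhO : Fin N → ℝ)
    (hlhP : ∀ n, 0 ≤ lhP n) (hlhO : ∀ n, 0 ≤ lhO n)
    (hlhsum : ∀ n, lhP n + lhO n = En n)
    (E LhP LhO : ℝ)
    (hE : E = ∑ n, En n) (hLhP : LhP = ∑ n, lhP n) (hLhO : LhO = ∑ n, lhO n)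
    (hpeak : LhO ≤ E / 2 ∧ E / 2 ≤ LhP)
    (hassum : ∀ n, 2 * ((N : ℝ) - 1) * lhP n ≥ (LhP - LhO) - En n)
    (α : ℝ) (hα : α ∈ Set.Icc (0 : ℝ) 1)
    (φ : ℝ → ℝ) (hφ : ∀ a, φ a = 2 * a / ((1 + a) + (1 - a) * (N : ℝ)))
    (f : Fin N → (Fin N → ℝ) → (Fin N → ℝ) → ℝ)
    (hf : ∀ n lP lO, f n lP lO =
      (1 - α) * (lP n * (∑ m, lP m) + lO n * (∑ m, lO m))
        + α * ((lP n - lhP n) ^ 2 + (lO n - lhO n) ^ 2))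
    (lP lO : Fin N → ℝ)
    (hfeas : ∀ n, lP n + lO n = En n ∧ 0 ≤ lP n ∧ 0 ≤ lO n)
    (hNE : ∀ n xP xO, xP + xO = En n → 0 ≤ xP → 0 ≤ xO →
      f n lP lO ≤ f n (Function.update lP n xP) (Function.update lO n xO)) :
    (∑ n, lP n) ^ 2 + (∑ n, lO n) ^ 2
      = (1 / 2) * (E ^ 2 + (φ α) ^ 2 * (LhP - LhO) ^ 2) := by
  obtain ⟨hα0, hα1⟩ := hα
  have h2a : (0:ℝ) < 2 + 2 * α := by linarith
  -- abbreviations as opaque atoms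
  obtain ⟨K, hK⟩ : ∃ K : ℝ, K = (1 + α) + (1 - α) * (N : ℝ) := ⟨_, rfl⟩
  have hKpos : 0 < K := by
    have : (0:ℝ) ≤ (1 - α) * (N : ℝ) := mul_nonneg (by linarith) (Nat.cast_nonneg N)
    rw [hK]; linarith
  obtain ⟨Ds, hDs⟩ : ∃ D : ℝ, D = 2 * α * (LhP - LhO) / K := ⟨_, rfl⟩
  have hDsK : K * Ds = 2 * α * (LhP - LhO) := by
    rw [hDs]; field_simp
  have hE' : LhP + LhO = E := by
    rw [hLhP, hLhO, hE, ← Finset.sum_add_distrib]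
    exact Finset.sum_congr rfl fun n _ => hlhsum n
  have hDhat : 0 ≤ LhP - LhO := by linarith [hpeak.1, hpeak.2]
  have hDs0 : 0 ≤ Ds := by
    rw [hDs]
    exact div_nonneg (by positivity) hKpos.le
  -- the candidate equilibrium point
  obtain ⟨x, hx⟩ : ∃ x : Fin N → ℝ,
      ∀ n, x n = (4 * α * lhP n + (1 - α) * (En n - Ds)) / (2 + 2 * α) :=
    ⟨_, fun n => rfl⟩
  have hxval : ∀ n, (2 + 2 * α) * x n = 4 * α * lhP n + (1 - α) * (En n - Ds) := by
    intro n; rw [hx n]; field_simp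
  -- feasibility of the candidate
  have hx0 : ∀ n, 0 ≤ x n := by
    intro n
    have hnum : 0 ≤ 4 * α * lhP n + (1 - α) * (En n - Ds) := by
      by_contra hneg
      push_neg at hneg
      have hKt : K * (4 * α * lhP n + (1 - α) * (En n - Ds)) < 0 :=
        mul_neg_of_pos_of_neg hKpos hneg
      have t1 : 0 ≤ α * (1 - α) * (2 * ((N:ℝ) - 1) * lhP n + En n - (LhP - LhO)) :=
        mul_nonneg (mul_nonneg hα0 (by linarith)) (by linarith [hassum n])
      have t2 : 0 ≤ α * lhP n := mul_nonneg hα0 (hlhP n)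
      have t3 : 0 ≤ (1 - α) * (1 - α) * (1 + (N:ℝ)) * En n :=
        mul_nonneg (mul_nonneg (mul_nonneg (by linarith) (by linarith)) (by positivity))
          (hEn n).le
      have hDsK2 : (1 - α) * (K * Ds) = (1 - α) * (2 * α * (LhP - LhO)) := by rw [hDsK]
      rw [hK] at hKt hDsK2
      nlinarith [t1, t2, t3, hDsK2, hKt]
    rw [hx n]
    exact div_nonneg hnum h2a.le
  have hxE : ∀ n, x n ≤ En n := by
    intro n
    have hple : lhP n ≤ En n := by linarith [hlhO n, hlhsum n]
    have t1 : α * lhP n ≤ α * En n := mul_le_mul_of_nonneg_left hple hα0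
    have t2 : 0 ≤ (1 - α) * Ds := mul_nonneg (by linarith) hDs0
    have t3 : 0 ≤ (1 - α) * En n := mul_nonneg (by linarith) (hEn n).le
    rw [hx n]
    rw [div_le_iff₀ h2a]
    nlinarith [t1, t2, t3]
  -- sums
  have hSPSO : (∑ n, lP n) + (∑ n, lO n) = E := by
    rw [hE, ← Finset.sum_add_distrib]
    exact Finset.sum_congr rfl fun n _ => (hfeas n).1
  have hsumx : ∑ n, x n = (E + Ds) / 2 := by
    have h1 : (2 + 2 * α) * ∑ n, x n
        = ∑ n, (4 * α * lhP n + (1 - α) * (En n - Ds)) := by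
      rw [Finset.mul_sum]
      exact Finset.sum_congr rfl fun n _ => hxval n
    have h2 : ∑ n, (4 * α * lhP n + (1 - α) * (En n - Ds))
        = 4 * α * LhP + (1 - α) * (E - (N:ℝ) * Ds) := by
      rw [Finset.sum_add_distrib, ← Finset.mul_sum, ← Finset.mul_sum,
        Finset.sum_sub_distrib, Finset.sum_const, Finset.card_univ, Fintype.card_fin,
        nsmul_eq_mul, hLhP, hE]
    have h3 : 4 * α * LhP + (1 - α) * (E - (N:ℝ) * Ds) = (2 + 2 * α) * ((E + Ds) / 2) := by
      rw [hK] at hDsK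
      linear_combination -hDsK + 2 * α * hE'
    have h4 : (2 + 2 * α) * ∑ n, x n = (2 + 2 * α) * ((E + Ds) / 2) := by
      rw [h1, h2, h3]
    exact mul_left_cancel₀ (ne_of_gt h2a) h4
  -- sum over an update
  have hupd : ∀ (g : Fin N → ℝ) (n : Fin N) (b : ℝ),
      ∑ m, Function.update g n b m = (∑ m, g m) - g n + b := by
    intro g n b
    rw [Finset.sum_update_of_mem (Finset.mem_univ n),
      Finset.sum_sdiff_eq_sub (Finset.singleton_subset_iff.mpr (Finset.mem_univ n)),
      Finset.sum_singleton]
    ring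
  -- key per-player inequality from the Nash property
  have key : ∀ n,
      ((2 + 2 * α) * lP n + (1 - α) * ((∑ m, lP m) - (∑ m, lO m) - En n)
          - 4 * α * lhP n) * (lP n - x n)
        ≤ 2 * (lP n - x n) ^ 2 := by
    intro n
    obtain ⟨hsum_n, hlP_n, hlO_n⟩ := hfeas n
    have hfe : 0 ≤ En n - x n := by linarith [hxE n]
    have h := hNE n (x n) (En n - x n) (by ring) (hx0 n) hfe
    rw [hf, hf] at h
    rw [hupd lP n (x n), hupd lO n (En n - x n)] at h
    simp only [Function.update_self] at h
    have hlOn : lO n = En n - lP n := by linarith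
    have hlhOn : lhO n = En n - lhP n := by linarith [hlhsum n]
    rw [hlOn, hlhOn] at h
    nlinarith [h]
  obtain ⟨s, hs_def⟩ : ∃ s : ℝ, s = (∑ n, lP n) - (E + Ds) / 2 := ⟨_, rfl⟩
  have hsumd : ∑ n, (lP n - x n) = s := by
    rw [Finset.sum_sub_distrib, hsumx, hs_def]
  have hGid : ∀ n,
      (2 + 2 * α) * lP n + (1 - α) * ((∑ m, lP m) - (∑ m, lO m) - En n) - 4 * α * lhP n
        = (2 + 2 * α) * (lP n - x n) + 2 * (1 - α) * s := by
    intro n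
    have h1 := hxval n
    rw [hs_def]
    have h2 : (∑ m, lO m) = E - (∑ m, lP m) := by linarith [hSPSO]
    rw [h2]
    linear_combination h1
  have hd2 : 0 ≤ ∑ n, (lP n - x n) ^ 2 := Finset.sum_nonneg fun n _ => sq_nonneg _
  have main : (2 + 2 * α) * (∑ n, (lP n - x n) ^ 2) + 2 * (1 - α) * s * s
      ≤ 2 * ∑ n, (lP n - x n) ^ 2 := by
    have hle := Finset.sum_le_sum fun n (_ : n ∈ Finset.univ) => key n
    have heq : ∑ n, (((2 + 2 * α) * lP n
          + (1 - α) * ((∑ m, lP m) - (∑ m, lO m) - En n) - 4 * α * lhP n)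
            * (lP n - x n))
        = (2 + 2 * α) * (∑ n, (lP n - x n) ^ 2)
            + 2 * (1 - α) * s * (∑ n, (lP n - x n)) := by
      rw [Finset.mul_sum, Finset.mul_sum, ← Finset.sum_add_distrib]
      refine Finset.sum_congr rfl fun n _ => ?_
      rw [hGid n]; ring
    rw [heq, hsumd] at hle
    have h5 : (∑ n, 2 * (lP n - x n) ^ 2) = 2 * ∑ n, (lP n - x n) ^ 2 :=
      (Finset.mul_sum _ _ _).symm
    linarith [hle, h5]
  -- conclude s = 0
  obtain ⟨T, hTdef⟩ : ∃ T : ℝ, T = ∑ n, (lP n - x n) ^ 2 := ⟨_, rfl⟩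
  rw [← hTdef] at main hd2
  have hs0 : s = 0 := by
    rcases lt_or_eq_of_le hα1 with hlt | heq1
    · have hαT : 0 ≤ α * T := mul_nonneg hα0 hd2
      have h1 : (1 - α) * (s * s) ≤ 0 := by nlinarith [main, hαT]
      have hss : s * s ≤ 0 := by
        by_contra hc
        push_neg at hc
        exact absurd (mul_pos (by linarith : (0:ℝ) < 1 - α) hc) (by linarith)
      exact mul_self_eq_zero.mp (le_antisymm hss (mul_self_nonneg s))
    · have hm : α * T = T := by rw [heq1, one_mul]
      have hm2 : α * (s * s) = s * s := by rw [heq1, one_mul]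
      have hT : T ≤ 0 := by nlinarith [main, hm, hm2]
      rw [hTdef] at hT hd2
      have hall := (Finset.sum_eq_zero_iff_of_nonneg
        (fun n (_ : n ∈ Finset.univ) => sq_nonneg (lP n - x n))).mp (le_antisymm hT hd2)
      rw [← hsumd]
      refine Finset.sum_eq_zero fun n hn => ?_
      have := sq_eq_zero_iff.mp (hall n hn)
      linarith
  -- finish with algebra
  have hSPval : (∑ n, lP n) = (E + Ds) / 2 := by
    rw [hs_def] at hs0; linarith
  have hSOval : (∑ n, lO n) = (E - Ds) / 2 := by linarith [hSPSO]
  rw [hSPval, hSOval, hφ α, ← hK]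
  rw [hDs]
  field_simp
  ring
end

section
/- Let N ≥ 2, E > 0, D ≥ 0 and define the equilibrium system costs C^DP(α) = (1/2)(E² + α² D²) and C^HP(α) = (1/2)(E² + φ(α)² D²) with φ(α) = 2α/((1+α)+(1−α)N). Then for every α ∈ [0,1], C^HP(α) ≤ C^DP(α); moreover, if D > 0 the inequality is strict for every α ∈ (0,1). Consequently the price of efficiency of the hourly-proportional mechanism never exceeds that of the daily-proportional mechanism. -/
/-- The equilibrium system cost of the hourly-proportional
mechanism never exceeds that of the daily-proportional mechanism, with strict
inequality on `(0,1)` when `D > 0`; consequently the same comparison holds for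
the prices of efficiency (ratios to the minimal feasible system cost). -/
theorem hp_system_cost_le_dp_system_cost
    (N : ℕ) (hN : 2 ≤ N)
    (E D : ℝ) (hE : 0 < E) (hD : 0 ≤ D)
    (φ CDP CHP : ℝ → ℝ)
    (hφ : ∀ a, φ a = 2 * a / ((1 + a) + (1 - a) * (N : ℝ)))
    (hCDP : ∀ a, CDP a = (1 / 2) * (E ^ 2 + a ^ 2 * D ^ 2))
    (hCHP : ∀ a, CHP a = (1 / 2) * (E ^ 2 + (φ a) ^ 2 * D ^ 2)) :
    (∀ α ∈ Set.Icc (0 : ℝ) 1, CHP α ≤ CDP α) ∧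
      (0 < D → ∀ α ∈ Set.Ioo (0 : ℝ) 1, CHP α < CDP α) ∧
      (∀ Cstar : ℝ, 0 < Cstar → ∀ α ∈ Set.Icc (0 : ℝ) 1,
        CHP α / Cstar ≤ CDP α / Cstar) := by
  have hN' : (2 : ℝ) ≤ (N : ℝ) := by exact_mod_cast hN
  -- key bounds on φ
  have hphi : ∀ a : ℝ, 0 ≤ a → a ≤ 1 → 0 ≤ φ a ∧ φ a ≤ a := by
    intro a ha0 ha1
    have hd : (2 : ℝ) ≤ (1 + a) + (1 - a) * (N : ℝ) := by nlinarith
    have hdpos : (0 : ℝ) < (1 + a) + (1 - a) * (N : ℝ) := by linarith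
    constructor
    · rw [hφ]; positivity
    · rw [hφ]
      rw [div_le_iff₀ hdpos]
      nlinarith
  have hphi_lt : ∀ a : ℝ, 0 < a → a < 1 → φ a < a := by
    intro a ha0 ha1
    have hd : (2 : ℝ) < (1 + a) + (1 - a) * (N : ℝ) := by nlinarith
    have hdpos : (0 : ℝ) < (1 + a) + (1 - a) * (N : ℝ) := by linarith
    rw [hφ, div_lt_iff₀ hdpos]
    nlinarith
  have hle : ∀ α ∈ Set.Icc (0 : ℝ) 1, CHP α ≤ CDP α := by
    intro α hα
    obtain ⟨h0, h1⟩ := hphi α hα.1 hα.2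
    rw [hCHP, hCDP]
    have : φ α ^ 2 ≤ α ^ 2 := by nlinarith
    nlinarith [sq_nonneg D]
  refine ⟨hle, ?_, ?_⟩
  · intro hDpos α hα
    obtain ⟨h0, _⟩ := hphi α (le_of_lt hα.1) (le_of_lt hα.2)
    have hlt := hphi_lt α hα.1 hα.2
    rw [hCHP, hCDP]
    have : φ α ^ 2 < α ^ 2 := by nlinarith [pow_pos hDpos 2]
    nlinarith [pow_pos hDpos 2]
  · intro Cstar hC α hα
    exact div_le_div_of_nonneg_right (hle α hα) hC.le |>.trans_eq rfl
end

section
/- In the two-period framework, assume that for all n, ℓ̂_P^n/E_n + 1/2 ≥ ℓ̂_P/E, and let α ∈ (0,1]. If ℓ is the Nash equilibrium of the daily-proportional game G^DP_α, then the social cost at equilibrium equals SC^DP_α = Σ_n f_n^α(ℓ) = (1−α)·[ E²/2 + (D²/2)·( α² + V_E·(1−α)·α ) ], where D = ℓ̂_P − ℓ̂_O and V_E = Σ_n E_n²/E². -/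
/-! Each consumer's cost is a convex quadratic in its own peak load `x ∈ [0, E_n]`; at a profile
with peak–offpeak gap `d = ℓ_P − ℓ_O` its slope at `ℓ_P^n` is `4α (ℓ_P^n − c_n(d))`, where
`c_n(d) = ℓ̂_P^n − (1−α)(E_n/E) d/(2α)` (`dpResponse`) decreases in `d`. So each equilibrium
load is `c_n(d)` clipped to `[0, E_n]`. The hypothesis on `ℓ̂_P^n / E_n` puts `c_n(αD)` inside
`[0, E_n]`, and the loads `c_n(αD)` have gap exactly `αD`; monotonicity then forces `d = αD` and
`ℓ_P^n = c_n(αD)`, after which the social cost is a direct computation. -/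

open Set Filter Topology

theorem sum_update_eq_sub_add {ι M : Type*} [Fintype ι] [DecidableEq ι] [AddCommGroup M]
    (g : ι → M) (i : ι) (b : M) : ∑ j, Function.update g i b j = ∑ j, g j - g i + b := by
  rw [Finset.sum_update_of_mem (Finset.mem_univ i), ← Finset.erase_eq,
    Finset.sum_erase_eq_sub (Finset.mem_univ i), add_comm]

theorem nonneg_of_forall_Ioc_mul_add_nonneg {A t b : ℝ} (hb : 0 < b)
    (h : ∀ u ∈ Ioc 0 b, 0 ≤ A * u + t) : 0 ≤ t := by
  have hlim : Tendsto (fun u => A * u + t) (𝓝[>] 0) (𝓝 t) := by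
    have : Continuous (fun u : ℝ => A * u + t) := by fun_prop
    simpa using (this.tendsto 0).mono_left nhdsWithin_le_nhds
  exact ge_of_tendsto hlim (eventually_of_mem (Ioc_mem_nhdsGT hb) h)

theorem IsMinOn.quadratic_first_order {A B a b x : ℝ} (hx : x ∈ Icc a b)
    (hmin : IsMinOn (fun z => A * z ^ 2 + B * z) (Icc a b) x) :
    (x < b → 0 ≤ 2 * A * x + B) ∧ (a < x → 2 * A * x + B ≤ 0) := by
  rw [isMinOn_iff] at hmin
  constructor
  · intro hxb
    refine nonneg_of_forall_Ioc_mul_add_nonneg (A := A) (sub_pos.2 hxb) fun u hu => ?_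
    have h := hmin (x + u) ⟨by linarith [hx.1, hu.1], by linarith [hu.2]⟩
    exact nonneg_of_mul_nonneg_right (by linear_combination h) hu.1
  · intro hax
    suffices 0 ≤ -(2 * A * x + B) by linarith
    refine nonneg_of_forall_Ioc_mul_add_nonneg (A := A) (sub_pos.2 hax) fun u hu => ?_
    have h := hmin (x - u) ⟨by linarith [hu.2], by linarith [hx.2, hu.1]⟩
    exact nonneg_of_mul_nonneg_right (by linear_combination h) hu.1

theorem peak_load_first_order {w α e p q l o SP SO : ℝ} (hα : 0 < α) (hlo : l + o = e)
    (hpq : p + q = e) (hl : l ∈ Icc 0 e)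
    (hmin : ∀ x ∈ Icc 0 e, w * (SP ^ 2 + SO ^ 2) + α * ((l - p) ^ 2 + (o - q) ^ 2) ≤
      w * ((SP - l + x) ^ 2 + (SO - o + (e - x)) ^ 2) + α * ((x - p) ^ 2 + (e - x - q) ^ 2)) :
    (l < e → p - w * (SP - SO) / (2 * α) ≤ l) ∧ (0 < l → l ≤ p - w * (SP - SO) / (2 * α)) := by
  obtain rfl : o = e - l := by linarith
  obtain rfl : q = e - p := by linarith
  have hfoc := IsMinOn.quadratic_first_order (A := 2 * w + 2 * α)
    (B := 2 * w * (SP - SO - 2 * l) - 4 * α * p) hl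
    (isMinOn_iff.2 fun z hz => by linear_combination hmin z hz)
  have hslope : 2 * (2 * w + 2 * α) * l + (2 * w * (SP - SO - 2 * l) - 4 * α * p) =
      4 * α * (l - (p - w * (SP - SO) / (2 * α))) := by
    field_simp
    ring
  rw [hslope] at hfoc
  have h4α : 0 < 4 * α := by positivity
  exact ⟨fun h => by linarith [nonneg_of_mul_nonneg_right (hfoc.1 h) h4α],
    fun h => by linarith [nonpos_of_mul_nonpos_right (hfoc.2 h) h4α]⟩

theorem eq_of_first_order_of_gap {ι : Type*} [Fintype ι] {c : ι → ℝ → ℝ}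
    (hc : ∀ i, Antitone (c i)) {e l : ι → ℝ} {E d d₀ : ℝ}
    (hup : ∀ i, l i < e i → c i d ≤ l i) (hlow : ∀ i, 0 < l i → l i ≤ c i d)
    (hc₀ : ∀ i, c i d₀ ∈ Icc 0 (e i)) (hd : d = 2 * ∑ i, l i - E)
    (hd₀ : d₀ = 2 * ∑ i, c i d₀ - E) (i : ι) : l i = c i d₀ := by
  have hle : d₀ ≤ d → ∀ i, l i ≤ c i d₀ := fun h i => by
    by_contra! hgt
    linarith [hlow i ((hc₀ i).1.trans_lt hgt), hc i h]
  have hge : d ≤ d₀ → ∀ i, c i d₀ ≤ l i := fun h i => by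
    by_contra! hlt
    linarith [hup i (hlt.trans_le (hc₀ i).2), hc i h]
  have hgap : d = d₀ := by
    rcases le_total d₀ d with h | h
    · linarith [Finset.sum_le_sum fun i (_ : i ∈ Finset.univ) => hle h i]
    · linarith [Finset.sum_le_sum fun i (_ : i ∈ Finset.univ) => hge h i]
  exact le_antisymm (hle hgap.ge i) (hge hgap.le i)

theorem dp_peak_load_mem_Icc {e p E P α : ℝ} (he : 0 < e) (hE : 0 < E) (hpe : p ≤ e)
    (hα : α ∈ Icc 0 1) (hP : E / 2 ≤ P) (hp : p / e + 1 / 2 ≥ P / E) :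
    p - (1 - α) * (e / E) * (2 * P - E) / 2 ∈ Icc 0 e := by
  set s := e * (P / E - 1 / 2)
  have hshift : (1 - α) * (e / E) * (2 * P - E) / 2 = (1 - α) * s := by
    simp only [s]; field_simp
  have hs : 0 ≤ s :=
    mul_nonneg he.le (by rw [le_sub_iff_add_le, zero_add, le_div_iff₀ hE]; linarith)
  have hsp : s ≤ p := by
    have := mul_le_mul_of_nonneg_left (show P / E - 1 / 2 ≤ p / e by linarith) he.le
    rwa [mul_div_cancel₀ _ he.ne'] at this
  rw [hshift]
  constructor <;> nlinarith [hα.1, hα.2]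

section DailyProportional

variable {N : ℕ} {En lhP lhO lP lO : Fin N → ℝ} {E α : ℝ}
  {f : Fin N → (Fin N → ℝ) → (Fin N → ℝ) → ℝ}

noncomputable def dpResponse (En lhP : Fin N → ℝ) (E α : ℝ) (n : Fin N) (d : ℝ) : ℝ :=
  lhP n - (1 - α) * (En n / E) * d / (2 * α)

theorem dpResponse_antitone {n : Fin N} (hα : α ∈ Ioc 0 1) (hEn : 0 ≤ En n) (hE : 0 ≤ E) :
    Antitone (dpResponse En lhP E α n) := fun d₁ d₂ h => by
  have : 0 ≤ (1 - α) * (En n / E) := mul_nonneg (by linarith [hα.2]) (by positivity)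
  have := hα.1
  unfold dpResponse
  gcongr

theorem dpResponse_mul_self (hα : α ≠ 0) (n : Fin N) (D : ℝ) :
    dpResponse En lhP E α n (α * D) = lhP n - (1 - α) * (En n / E) * D / 2 := by
  unfold dpResponse
  field_simp

theorem sum_dpResponse (hE : E = ∑ n, En n) (hE0 : E ≠ 0) (d : ℝ) :
    ∑ n, dpResponse En lhP E α n d = ∑ n, lhP n - (1 - α) * d / (2 * α) := by
  unfold dpResponse
  rw [Finset.sum_sub_distrib, ← Finset.sum_div, ← Finset.sum_mul, ← Finset.mul_sum,
    ← Finset.sum_div, ← hE, div_self hE0, mul_one]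

theorem dp_nash_first_order (hα : 0 < α) (hlhsum : ∀ n, lhP n + lhO n = En n)
    (hf : ∀ n lP lO, f n lP lO =
      (1 - α) * (En n / E) * ((∑ m, lP m) ^ 2 + (∑ m, lO m) ^ 2)
        + α * ((lP n - lhP n) ^ 2 + (lO n - lhO n) ^ 2))
    (hfeas : ∀ n, lP n + lO n = En n ∧ 0 ≤ lP n ∧ 0 ≤ lO n)
    (hNE : ∀ n xP xO, xP + xO = En n → 0 ≤ xP → 0 ≤ xO →
      f n lP lO ≤ f n (Function.update lP n xP) (Function.update lO n xO)) (n : Fin N) :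
    (lP n < En n → dpResponse En lhP E α n (∑ m, lP m - ∑ m, lO m) ≤ lP n) ∧
      (0 < lP n → lP n ≤ dpResponse En lhP E α n (∑ m, lP m - ∑ m, lO m)) :=
  peak_load_first_order hα (hfeas n).1 (hlhsum n) ⟨(hfeas n).2.1, by linarith [hfeas n]⟩
    fun x hx => by
      simpa only [hf, sum_update_eq_sub_add, Function.update_self] using
        hNE n x (En n - x) (by ring) hx.1 (by linarith [hx.2])

theorem dp_social_cost_eq {D : ℝ} (hE : E = ∑ n, En n) (hE0 : E ≠ 0)
    (hlhsum : ∀ n, lhP n + lhO n = En n)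
    (hf : ∀ n lP lO, f n lP lO =
      (1 - α) * (En n / E) * ((∑ m, lP m) ^ 2 + (∑ m, lO m) ^ 2)
        + α * ((lP n - lhP n) ^ 2 + (lO n - lhO n) ^ 2))
    (hlsum : ∀ n, lP n + lO n = En n)
    (hload : ∀ n, lP n = lhP n - (1 - α) * (En n / E) * D / 2)
    (hSP : ∑ n, lP n = (E + α * D) / 2) :
    ∑ n, f n lP lO
      = (1 - α) * (E ^ 2 / 2 + (D ^ 2 / 2) * (α ^ 2 + (∑ n, En n ^ 2 / E ^ 2) * (1 - α) * α)) := by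
  have hSO : ∑ n, lO n = (E - α * D) / 2 := by
    have : ∑ n, (lP n + lO n) = E := by simp only [hlsum, hE]
    rw [Finset.sum_add_distrib, hSP] at this
    linarith
  have hterm : ∀ n, f n lP lO = (1 - α) * ((E + α * D) ^ 2 + (E - α * D) ^ 2) / 4 / E * En n
      + α * (1 - α) ^ 2 * (D ^ 2 / 2) * (En n ^ 2 / E ^ 2) := fun n => by
    rw [hf, hSP, hSO, show lO n = En n - lP n by linarith [hlsum n],
      show lhO n = En n - lhP n by linarith [hlhsum n], hload n]
    field_simp
    ring
  rw [Finset.sum_congr rfl fun n _ => hterm n, Finset.sum_add_distrib, ← Finset.mul_sum,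
    ← Finset.mul_sum, ← hE]
  field_simp
  ring

end DailyProportional

theorem dp_two_period_social_cost_general
    (N : ℕ)
    (En : Fin N → ℝ) (hEn : ∀ n, 0 < En n)
    (lhP lhO : Fin N → ℝ)
    (hlhO : ∀ n, 0 ≤ lhO n)
    (hlhsum : ∀ n, lhP n + lhO n = En n)
    (E LhP LhO : ℝ)
    (hE : E = ∑ n, En n) (hLhP : LhP = ∑ n, lhP n) (hLhO : LhO = ∑ n, lhO n)
    (hpeak : LhO ≤ E / 2 ∧ E / 2 ≤ LhP)
    (hassum : ∀ n, lhP n / En n + 1 / 2 ≥ LhP / E)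
    (α : ℝ) (hα : α ∈ Set.Ioc (0 : ℝ) 1)
    (D VE : ℝ) (hD : D = LhP - LhO) (hVE : VE = ∑ n, (En n) ^ 2 / E ^ 2)
    (f : Fin N → (Fin N → ℝ) → (Fin N → ℝ) → ℝ)
    (hf : ∀ n lP lO, f n lP lO =
      (1 - α) * (En n / E) * ((∑ m, lP m) ^ 2 + (∑ m, lO m) ^ 2)
        + α * ((lP n - lhP n) ^ 2 + (lO n - lhO n) ^ 2))
    (lP lO : Fin N → ℝ)
    (hfeas : ∀ n, lP n + lO n = En n ∧ 0 ≤ lP n ∧ 0 ≤ lO n)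
    (hNE : ∀ n xP xO, xP + xO = En n → 0 ≤ xP → 0 ≤ xO →
      f n lP lO ≤ f n (Function.update lP n xP) (Function.update lO n xO)) :
    (∑ n, f n lP lO)
      = (1 - α) * (E ^ 2 / 2 + (D ^ 2 / 2) * (α ^ 2 + VE * (1 - α) * α)) := by
  obtain ⟨hα0, hα1⟩ := hα
  rcases Nat.eq_zero_or_pos N with rfl | hN
  · simp [hE, hD, hLhP, hLhO]
  have hEpos : 0 < E :=
    hE ▸ Finset.sum_pos (fun n _ => hEn n) (Finset.univ_nonempty_iff.2 ⟨⟨0, hN⟩⟩)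
  have hLsum : LhP + LhO = E := by simp only [hLhP, hLhO, hE, ← Finset.sum_add_distrib, hlhsum]
  have hDP : D = 2 * LhP - E := by linarith
  have hSsum : ∑ n, lP n + ∑ n, lO n = E := by
    simp only [hE, ← Finset.sum_add_distrib, fun n => (hfeas n).1]
  have hc₀_mem : ∀ n, dpResponse En lhP E α n (α * D) ∈ Icc 0 (En n) := fun n => by
    rw [dpResponse_mul_self hα0.ne', hDP]
    exact dp_peak_load_mem_Icc (hEn n) hEpos (by linarith [hlhO n, hlhsum n]) ⟨hα0.le, hα1⟩
      hpeak.2 (hassum n)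
  have hsum_c : ∑ n, dpResponse En lhP E α n (α * D) = (E + α * D) / 2 := by
    rw [sum_dpResponse hE hEpos.ne', ← hLhP]
    field_simp
    linarith
  have hbest := dp_nash_first_order hα0 hlhsum hf hfeas hNE
  have hload : ∀ n, lP n = dpResponse En lhP E α n (α * D) :=
    eq_of_first_order_of_gap (fun n => dpResponse_antitone ⟨hα0, hα1⟩ (hEn n).le hEpos.le)
      (fun n => (hbest n).1) (fun n => (hbest n).2) hc₀_mem (E := E) (by linarith) (by linarith)
  rw [hVE]
  exact dp_social_cost_eq hE hEpos.ne' hlhsum hf (fun n => (hfeas n).1)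
    (fun n => (hload n).trans (dpResponse_mul_self hα0.ne' n D))
    ((Finset.sum_congr rfl fun n _ => hload n).trans hsum_c)

/-- In the two-period framework, the social cost at the Nash
equilibrium of the daily-proportional game `G^DP_α` (α ∈ (0,1]) equals
`(1−α)[E²/2 + (D²/2)(α² + V_E (1−α) α)]` with `D = ℓ̂_P − ℓ̂_O` and
`V_E = Σ_n E_n²/E²`. -/
theorem dp_two_period_social_cost
    (N : ℕ)
    (En : Fin N → ℝ) (hEn : ∀ n, 0 < En n)
    (lhP lhO : Fin N → ℝ)
    (hlhP : ∀ n, 0 ≤ lhP n) (hlhO : ∀ n, 0 ≤ lhO n)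
    (hlhsum : ∀ n, lhP n + lhO n = En n)
    (E LhP LhO : ℝ)
    (hE : E = ∑ n, En n) (hLhP : LhP = ∑ n, lhP n) (hLhO : LhO = ∑ n, lhO n)
    (hpeak : LhO ≤ E / 2 ∧ E / 2 ≤ LhP)
    (hassum : ∀ n, lhP n / En n + 1 / 2 ≥ LhP / E)
    (α : ℝ) (hα : α ∈ Set.Ioc (0 : ℝ) 1)
    (D VE : ℝ) (hD : D = LhP - LhO) (hVE : VE = ∑ n, (En n) ^ 2 / E ^ 2)
    (f : Fin N → (Fin N → ℝ) → (Fin N → ℝ) → ℝ)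
    (hf : ∀ n lP lO, f n lP lO =
      (1 - α) * (En n / E) * ((∑ m, lP m) ^ 2 + (∑ m, lO m) ^ 2)
        + α * ((lP n - lhP n) ^ 2 + (lO n - lhO n) ^ 2))
    (lP lO : Fin N → ℝ)
    (hfeas : ∀ n, lP n + lO n = En n ∧ 0 ≤ lP n ∧ 0 ≤ lO n)
    (hNE : ∀ n xP xO, xP + xO = En n → 0 ≤ xP → 0 ≤ xO →
      f n lP lO ≤ f n (Function.update lP n xP) (Function.update lO n xO)) :
    (∑ n, f n lP lO)
      = (1 - α) * (E ^ 2 / 2 + (D ^ 2 / 2) * (α ^ 2 + VE * (1 - α) * α)) :=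
  dp_two_period_social_cost_general N En hEn lhP lhO hlhO hlhsum E LhP LhO hE hLhP hLhO hpeak hassum
    α hα D VE hD hVE f hf lP lO hfeas hNE
end

section
/- Let N ≥ 2, let E_1,…,E_N > 0 with E = Σ_n E_n, let V_E = Σ_n E_n²/E², and let D satisfy 0 ≤ D ≤ E. Then the function SC^DP : [0,1] → ℝ defined by SC^DP(α) = (1−α)·[ E²/2 + (D²/2)·( α² + V_E·(1−α)·α ) ] is strictly decreasing on [0,1]. -/
/-!
Expanding, `2 (SC a - SC b) = (b - a) (E² + D² R(a, b))` with
`1 + R = (1 - V_E) (a² + ab + b² - a - b + 1) + V_E (a + b)`, a convex combination of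
two quantities that are positive for `0 ≤ a < b`. Since `V_E ≤ 1` (the sum of squares of
nonnegative numbers is at most the square of their sum) and `D² ≤ E²`, the factor
`E² + D² R` is positive.
-/

open Finset Set

theorem sum_sq_div_sq_sum_le_one {ι : Type*} (s : Finset ι) {w : ι → ℝ}
    (hw : ∀ i ∈ s, 0 ≤ w i) : ∑ i ∈ s, w i ^ 2 / (∑ i ∈ s, w i) ^ 2 ≤ 1 := by
  rw [← Finset.sum_div]
  exact div_le_one_of_le₀ (sum_sq_le_sq_sum_of_nonneg hw) (sq_nonneg _)

theorem quadratic_form_sub_add_one_pos (a b : ℝ) : 0 < a ^ 2 + a * b + b ^ 2 - a - b + 1 := by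
  nlinarith [sq_nonneg (a + b - 2 / 3), sq_nonneg (a - b)]

theorem one_add_cubic_slope_pos {V a b : ℝ} (hV0 : 0 ≤ V) (hV1 : V ≤ 1) (ha : 0 ≤ a)
    (hab : a < b) :
    0 < 1 + ((1 - V) * (a ^ 2 + a * b + b ^ 2) - (1 - 2 * V) * (a + b) - V) := by
  have hQ := quadratic_form_sub_add_one_pos a b
  have hsum : 0 < a + b := by linarith
  have hconvex : 1 + ((1 - V) * (a ^ 2 + a * b + b ^ 2) - (1 - 2 * V) * (a + b) - V) =
      (1 - V) * (a ^ 2 + a * b + b ^ 2 - a - b + 1) + V * (a + b) := by ring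
  rw [hconvex]
  nlinarith [mul_nonneg (sub_nonneg.2 hV1) hQ.le, mul_nonneg hV0 hsum.le]

theorem strictAntiOn_dpSocialCost {E D V : ℝ} (hE : E ≠ 0) (hDE : D ^ 2 ≤ E ^ 2)
    (hV0 : 0 ≤ V) (hV1 : V ≤ 1) :
    StrictAntiOn (fun a : ℝ => (1 - a) * (E ^ 2 / 2 + (D ^ 2 / 2) * (a ^ 2 + V * (1 - a) * a)))
      (Ici 0) := by
  intro a ha b _ hab
  set R := (1 - V) * (a ^ 2 + a * b + b ^ 2) - (1 - 2 * V) * (a + b) - V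
  have hR := one_add_cubic_slope_pos hV0 hV1 ha hab
  have hE2 : 0 < E ^ 2 := by positivity
  have hfactor : 0 < E ^ 2 + D ^ 2 * R := by
    rcases le_or_gt 0 R with hR0 | hR0
    · nlinarith [sq_nonneg D]
    · nlinarith
  have hdiff : (1 - a) * (E ^ 2 / 2 + (D ^ 2 / 2) * (a ^ 2 + V * (1 - a) * a)) -
      (1 - b) * (E ^ 2 / 2 + (D ^ 2 / 2) * (b ^ 2 + V * (1 - b) * b)) =
      (b - a) / 2 * (E ^ 2 + D ^ 2 * R) := by ring
  have := mul_pos (half_pos (sub_pos.2 hab)) hfactor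
  dsimp only
  linarith

/-- The equilibrium social cost
`SC^DP(α) = (1−α)[E²/2 + (D²/2)(α² + V_E (1−α) α)]` of the daily-proportional
mechanism is strictly decreasing in `α` on `[0,1]`. -/
theorem dp_social_cost_strictly_decreasing
    (N : ℕ) (hN : 2 ≤ N)
    (En : Fin N → ℝ) (hEn : ∀ n, 0 < En n)
    (E VE : ℝ) (hE : E = ∑ n, En n)
    (hVE : VE = ∑ n, (En n) ^ 2 / E ^ 2)
    (D : ℝ) (hD : 0 ≤ D) (hDE : D ≤ E)
    (SC : ℝ → ℝ)
    (hSC : ∀ a, SC a =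
      (1 - a) * (E ^ 2 / 2 + (D ^ 2 / 2) * (a ^ 2 + VE * (1 - a) * a))) :
    StrictAntiOn SC (Set.Icc (0 : ℝ) 1) := by
  have hE0 : 0 < E := hE ▸ Finset.sum_pos (fun n _ => hEn n) ⟨⟨0, by omega⟩, mem_univ _⟩
  have hV0 : 0 ≤ VE := hVE ▸ by positivity
  have hV1 : VE ≤ 1 := hVE ▸ hE ▸ sum_sq_div_sq_sum_le_one univ fun n _ => (hEn n).le
  rw [show SC = _ from funext hSC]
  exact (strictAntiOn_dpSocialCost hE0.ne' (pow_le_pow_left₀ hD hDE 2) hV0 hV1).mono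
    Icc_subset_Ici_self
end

section
/- Suppose the per-period costs are quadratic, C_h(x) = a_{1,h} x + a_{2,h} x² with a_{2,h} ≥ 0 for all h, and let α = 0. If ℓ ∈ L is a Nash equilibrium of the daily-proportional game G^DP_0, then ℓ minimizes the total system cost Σ_h C_h(ℓ^h) over the feasible set L, i.e. Σ_h C_h(ℓ^h) ≤ Σ_h C_h(x^h) for every x ∈ L. -/
/-- With quadratic per-period costs (`a_{2,h} ≥ 0`) and `α = 0`,
any Nash equilibrium of the daily-proportional game minimizes the total system
cost over the feasible set `L`. -/
theorem dp_NE_minimizes_system_cost_alpha_zero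
    (N H : ℕ)
    (En : Fin N → ℝ) (hEn : ∀ n, 0 < En n)
    (lb ub : Fin N → Fin H → ℝ)
    (hlb : ∀ n h, 0 ≤ lb n h) (hbnds : ∀ n h, lb n h ≤ ub n h)
    (a1 a2 : Fin H → ℝ) (ha2 : ∀ h, 0 ≤ a2 h)
    (C : Fin H → ℝ → ℝ)
    (hC : ∀ h x, C h x = a1 h * x + a2 h * x ^ 2)
    (E : ℝ) (hE : E = ∑ n, En n)
    (Ln : Fin N → Set (Fin H → ℝ))
    (hLn : ∀ n, Ln n =
      {x | (∑ h, x h) = En n ∧ ∀ h, lb n h ≤ x h ∧ x h ≤ ub n h})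
    (L : Set (Fin N → Fin H → ℝ))
    (hL : L = {ℓ | ∀ n, ℓ n ∈ Ln n})
    (f : Fin N → (Fin N → Fin H → ℝ) → ℝ)
    (hf : ∀ n ℓ, f n ℓ = (En n / E) * ∑ h, C h (∑ m, ℓ m h))
    (ℓ : Fin N → Fin H → ℝ) (hℓL : ℓ ∈ L)
    (hNE : ∀ n, ∀ x ∈ Ln n, f n ℓ ≤ f n (Function.update ℓ n x)) :
    ∀ x ∈ L, (∑ h, C h (∑ m, ℓ m h)) ≤ ∑ h, C h (∑ m, x m h) := by
  intro x hxL
  subst hE hL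
  -- extract membership data
  have hmem : ∀ (z : Fin N → Fin H → ℝ), (∀ n, z n ∈ Ln n) → ∀ n,
      (∑ hh, z n hh) = En n ∧ ∀ hh, lb n hh ≤ z n hh ∧ z n hh ≤ ub n hh := by
    intro z hz n
    have := hz n
    rwa [hLn] at this
  have hℓm := hmem ℓ hℓL
  have hxm := hmem x hxL
  -- notation
  set s : Fin H → ℝ := fun hh => ∑ m, ℓ m hh with hs
  set g : Fin H → ℝ := fun hh => a1 hh + 2 * a2 hh * s hh with hg
  -- sums after unilateral update
  have hsum_update : ∀ (n : Fin N) (y : Fin H → ℝ) (hh : Fin H),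
      (∑ m, Function.update ℓ n y m hh) = s hh + (y hh - ℓ n hh) := by
    intro n y hh
    have hpt : ∀ m, Function.update ℓ n y m hh
        = ℓ m hh + (if m = n then y hh - ℓ n hh else 0) := by
      intro m
      rcases eq_or_ne m n with rfl | hm
      · simp [Function.update_apply]
      · simp [Function.update_apply, hm]
    calc (∑ m, Function.update ℓ n y m hh)
        = ∑ m, (ℓ m hh + (if m = n then y hh - ℓ n hh else 0)) :=
          Finset.sum_congr rfl (fun m _ => hpt m)
      _ = s hh + (y hh - ℓ n hh) := by
          rw [Finset.sum_add_distrib, Finset.sum_ite_eq' Finset.univ n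
            (fun _ => y hh - ℓ n hh)]
          simp [hs]
  -- the key deviation inequality
  have key : ∀ (n : Fin N), ∀ y ∈ Ln n,
      0 ≤ ∑ hh, (g hh * (y hh - ℓ n hh) + a2 hh * (y hh - ℓ n hh) ^ 2) := by
    intro n y hy
    have hEpos : 0 < ∑ m, En m :=
      Finset.sum_pos (fun i _ => hEn i) ⟨n, Finset.mem_univ n⟩
    have h1 := hNE n y hy
    rw [hf, hf] at h1
    have hpos : 0 < En n / ∑ m, En m := div_pos (hEn n) hEpos
    have h2 : (∑ hh, C hh (s hh)) ≤ ∑ hh, C hh (∑ m, Function.update ℓ n y m hh) :=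
      le_of_mul_le_mul_left (by exact h1) hpos
    have hexp : ∀ hh : Fin H,
        C hh (∑ m, Function.update ℓ n y m hh) - C hh (s hh)
          = g hh * (y hh - ℓ n hh) + a2 hh * (y hh - ℓ n hh) ^ 2 := by
      intro hh
      rw [hsum_update, hC, hC, hg]
      ring
    have h3 : 0 ≤ ∑ hh, (C hh (∑ m, Function.update ℓ n y m hh) - C hh (s hh)) := by
      rw [Finset.sum_sub_distrib]
      linarith
    calc (0:ℝ) ≤ ∑ hh, (C hh (∑ m, Function.update ℓ n y m hh) - C hh (s hh)) := h3
      _ = ∑ hh, (g hh * (y hh - ℓ n hh) + a2 hh * (y hh - ℓ n hh) ^ 2) :=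
          Finset.sum_congr rfl (fun hh _ => hexp hh)
  -- first-order condition per player
  have hA : ∀ n : Fin N, 0 ≤ ∑ hh, g hh * (x n hh - ℓ n hh) := by
    intro n
    set A : ℝ := ∑ hh, g hh * (x n hh - ℓ n hh) with hAdef
    set B : ℝ := ∑ hh, a2 hh * (x n hh - ℓ n hh) ^ 2 with hBdef
    have hB : 0 ≤ B :=
      Finset.sum_nonneg (fun hh _ => mul_nonneg (ha2 hh) (sq_nonneg _))
    have hstep : ∀ ε : ℝ, 0 < ε → ε ≤ 1 → 0 ≤ ε * A + ε ^ 2 * B := by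
      intro ε hε0 hε1
      set y : Fin H → ℝ := fun hh => ℓ n hh + ε * (x n hh - ℓ n hh) with hy
      have hyLn : y ∈ Ln n := by
        rw [hLn]
        constructor
        · have h1 := (hℓm n).1
          have h2 := (hxm n).1
          simp only [hy]
          rw [Finset.sum_add_distrib, ← Finset.mul_sum, Finset.sum_sub_distrib,
            h1, h2]
          ring
        · intro hh
          have h1 := (hℓm n).2 hh
          have h2 := (hxm n).2 hh
          constructor
          · show lb n hh ≤ y hh
            simp only [hy]
            nlinarith [h1.1, h2.1]
          · show y hh ≤ ub n hh
            simp only [hy]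
            nlinarith [h1.2, h2.2]
      have hk := key n y hyLn
      have heq : (∑ hh, (g hh * (y hh - ℓ n hh) + a2 hh * (y hh - ℓ n hh) ^ 2))
          = ε * A + ε ^ 2 * B := by
        rw [hAdef, hBdef, Finset.mul_sum, Finset.mul_sum, ← Finset.sum_add_distrib]
        refine Finset.sum_congr rfl (fun hh _ => ?_)
        simp only [hy]
        ring
      linarith [heq ▸ hk]
    by_contra hAneg
    push_neg at hAneg
    rcases eq_or_lt_of_le hB with hB0 | hBpos
    · have := hstep 1 one_pos le_rfl
      nlinarith
    · set ε : ℝ := min 1 (-A / (2 * B)) with hεdef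
      have hε0 : 0 < ε :=
        lt_min one_pos (div_pos (by linarith) (by linarith))
      have hε1 : ε ≤ 1 := min_le_left _ _
      have hεle : ε * (2 * B) ≤ -A := by
        have := min_le_right (1:ℝ) (-A / (2 * B))
        rw [le_div_iff₀ (by linarith : (0:ℝ) < 2 * B)] at this
        exact this
      have hε := hstep ε hε0 hε1
      nlinarith [mul_le_mul_of_nonneg_left hεle hε0.le]
  -- assemble
  have hexp2 : ∀ hh : Fin H,
      C hh (∑ m, x m hh) - C hh (s hh)
        = g hh * ((∑ m, x m hh) - s hh) + a2 hh * ((∑ m, x m hh) - s hh) ^ 2 := by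
    intro hh
    rw [hC, hC, hg]
    ring
  have t1 : 0 ≤ ∑ hh, a2 hh * ((∑ m, x m hh) - s hh) ^ 2 :=
    Finset.sum_nonneg (fun hh _ => mul_nonneg (ha2 hh) (sq_nonneg _))
  have t2 : 0 ≤ ∑ hh, g hh * ((∑ m, x m hh) - s hh) := by
    have hrw : ∀ hh : Fin H, g hh * ((∑ m, x m hh) - s hh)
        = ∑ n, g hh * (x n hh - ℓ n hh) := by
      intro hh
      rw [show ((∑ m, x m hh) - s hh) = ∑ n, (x n hh - ℓ n hh) by
        rw [Finset.sum_sub_distrib]]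
      rw [Finset.mul_sum]
    rw [Finset.sum_congr rfl (fun hh _ => hrw hh), Finset.sum_comm]
    exact Finset.sum_nonneg (fun n _ => hA n)
  have hmain : 0 ≤ ∑ hh, (C hh (∑ m, x m hh) - C hh (s hh)) := by
    rw [Finset.sum_congr rfl (fun hh _ => hexp2 hh), Finset.sum_add_distrib]
    linarith
  rw [Finset.sum_sub_distrib] at hmain
  linarith
end

section
/- In the two-period framework, for every α ∈ [0,1], both the peak and offpeak components of the candidate hourly-proportional equilibrium profile are nonnegative under the stated assumptions. Precisely, set ℓ_P^n = ℓ̂_P^n + ((1−α)/(2(1+α)))·( φ(α)·(ℓ̂_O − ℓ̂_P) + (ℓ̂_O^n − ℓ̂_P^n) ) and ℓ_O^n = E_n − ℓ_P^n, with φ(α) = 2α/((1+α)+(1−α)N). Then ℓ_O^n ≥ 0 for all n (with no additional assumption), and if 2(N−1)·ℓ̂_P^n ≥ (ℓ̂_P − ℓ̂_O) − E_n then also ℓ_P^n ≥ 0; hence (ℓ_P^n, ℓ_O^n) ∈ L_n for all n. -/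
/-- Nonnegativity (hence feasibility) of the candidate
hourly-proportional equilibrium profile in the two-period framework. -/
theorem hp_candidate_profile_feasible
    (N : ℕ)
    (En : Fin N → ℝ) (hEn : ∀ n, 0 < En n)
    (lhP lhO : Fin N → ℝ)
    (hlhP : ∀ n, 0 ≤ lhP n) (hlhO : ∀ n, 0 ≤ lhO n)
    (hlhsum : ∀ n, lhP n + lhO n = En n)
    (E LhP LhO : ℝ)
    (hE : E = ∑ n, En n) (hLhP : LhP = ∑ n, lhP n) (hLhO : LhO = ∑ n, lhO n)
    (hpeak : LhO ≤ E / 2 ∧ E / 2 ≤ LhP)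
    (α : ℝ) (hα : α ∈ Set.Icc (0 : ℝ) 1)
    (φ : ℝ → ℝ) (hφ : ∀ a, φ a = 2 * a / ((1 + a) + (1 - a) * (N : ℝ)))
    (lP lO : Fin N → ℝ)
    (hlP : ∀ n, lP n = lhP n +
      ((1 - α) / (2 * (1 + α))) * (φ α * (LhO - LhP) + (lhO n - lhP n)))
    (hlO : ∀ n, lO n = En n - lP n) :
    (∀ n, 0 ≤ lO n) ∧
      (∀ n, 2 * ((N : ℝ) - 1) * lhP n ≥ (LhP - LhO) - En n → 0 ≤ lP n) ∧
      (∀ n, 2 * ((N : ℝ) - 1) * lhP n ≥ (LhP - LhO) - En n →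
        lP n + lO n = En n ∧ 0 ≤ lP n ∧ 0 ≤ lO n) := by
  obtain ⟨hα0, hα1⟩ := hα
  set D : ℝ := (1 + α) + (1 - α) * (N : ℝ) with hD
  have hNnn : (0 : ℝ) ≤ (N : ℝ) := Nat.cast_nonneg N
  have hDpos : 0 < D := by
    have : 0 ≤ (1 - α) * (N : ℝ) := mul_nonneg (by linarith) hNnn
    simp only [hD]; linarith
  have h1α : 0 < 1 + α := by linarith
  have hΔ : 0 ≤ LhP - LhO := by linarith [hpeak.1, hpeak.2]
  -- key identity for lP n
  have keyP : ∀ n, lP n * (2 * (1 + α) * D) =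
      2 * (1 + α) * D * lhP n +
        (1 - α) * (2 * α * (LhO - LhP) + D * (lhO n - lhP n)) := by
    intro n
    rw [hlP n, hφ]
    field_simp
    ring
  have keyO : ∀ n, lO n * (2 * (1 + α) * D) =
      2 * (1 + α) * D * lhO n -
        (1 - α) * (2 * α * (LhO - LhP) + D * (lhO n - lhP n)) := by
    intro n
    have := keyP n
    rw [hlO n, ← hlhsum n]
    nlinarith [this]
  have hcpos : 0 < 2 * (1 + α) * D := by positivity
  have hOnn : ∀ n, 0 ≤ lO n := by
    intro n
    have hrhs : 0 ≤ lO n * (2 * (1 + α) * D) := by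
      rw [keyO n]
      nlinarith [mul_nonneg hDpos.le (mul_nonneg (by linarith : (0:ℝ) ≤ 1 + 3*α) (hlhO n)),
        mul_nonneg hDpos.le (mul_nonneg (by linarith : (0:ℝ) ≤ 1 - α) (hlhP n)),
        mul_nonneg (mul_nonneg hα0 (by linarith : (0:ℝ) ≤ 1 - α)) hΔ]
    by_contra h
    push_neg at h
    nlinarith [mul_neg_of_neg_of_pos h hcpos]
  have hPnn : ∀ n, 2 * ((N : ℝ) - 1) * lhP n ≥ (LhP - LhO) - En n → 0 ≤ lP n := by
    intro n hn
    have hΔle : LhP - LhO ≤ (2 * (N : ℝ) - 1) * lhP n + lhO n := by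
      have := hlhsum n
      nlinarith [hn]
    have hrhs : 0 ≤ lP n * (2 * (1 + α) * D) := by
      rw [keyP n]
      have h2 : 0 ≤ lhP n * ((1 - α)^2 * (N : ℝ) + 1 + 6*α + α^2) := by
        have : (0:ℝ) ≤ (1 - α)^2 * (N : ℝ) := by positivity
        nlinarith [hlhP n]
      have h3 : 0 ≤ lhO n * ((1 - α)^2 * (1 + (N : ℝ))) :=
        mul_nonneg (hlhO n) (by positivity)
      have h4 : 0 ≤ 2 * α * (1 - α) *
          ((2 * (N : ℝ) - 1) * lhP n + lhO n - (LhP - LhO)) := by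
        have : (0:ℝ) ≤ 2 * α * (1 - α) := by nlinarith
        exact mul_nonneg this (by linarith)
      simp only [hD]
      nlinarith [h2, h3, h4]
    by_contra h
    push_neg at h
    nlinarith [mul_neg_of_neg_of_pos h hcpos]
  refine ⟨hOnn, hPnn, fun n hn => ⟨?_, hPnn n hn, hOnn n⟩⟩
  rw [hlO n]; ring
end

section
/- In the two-period framework, for every α ∈ [0,1], both components of the candidate daily-proportional equilibrium profile are nonnegative under the stated assumption. Precisely, set ℓ_P^n = ℓ̂_P^n + (E_n/E)·((1−α)/2)·(ℓ̂_O − ℓ̂_P) and ℓ_O^n = E_n − ℓ_P^n. Then ℓ_O^n ≥ 0 for all n (with no additional assumption), and if ℓ̂_P^n/E_n + 1/2 ≥ ℓ̂_P/E then also ℓ_P^n ≥ 0; hence (ℓ_P^n, ℓ_O^n) ∈ L_n for all n. -/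
/-- Nonnegativity (hence feasibility) of the candidate
daily-proportional equilibrium profile in the two-period framework. -/
theorem dp_candidate_profile_feasible
    (N : ℕ)
    (En : Fin N → ℝ) (hEn : ∀ n, 0 < En n)
    (lhP lhO : Fin N → ℝ)
    (hlhP : ∀ n, 0 ≤ lhP n) (hlhO : ∀ n, 0 ≤ lhO n)
    (hlhsum : ∀ n, lhP n + lhO n = En n)
    (E LhP LhO : ℝ)
    (hE : E = ∑ n, En n) (hLhP : LhP = ∑ n, lhP n) (hLhO : LhO = ∑ n, lhO n)
    (hpeak : LhO ≤ E / 2 ∧ E / 2 ≤ LhP)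
    (α : ℝ) (hα : α ∈ Set.Icc (0 : ℝ) 1)
    (lP lO : Fin N → ℝ)
    (hlP : ∀ n, lP n = lhP n + (En n / E) * ((1 - α) / 2) * (LhO - LhP))
    (hlO : ∀ n, lO n = En n - lP n) :
    (∀ n, 0 ≤ lO n) ∧
      (∀ n, lhP n / En n + 1 / 2 ≥ LhP / E → 0 ≤ lP n) ∧
      (∀ n, lhP n / En n + 1 / 2 ≥ LhP / E →
        lP n + lO n = En n ∧ 0 ≤ lP n ∧ 0 ≤ lO n) := by
  obtain ⟨hα0, hα1⟩ := hα
  have hLO : LhO - LhP ≤ 0 := by linarith [hpeak.1, hpeak.2]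
  have hEpos : ∀ _ : Fin N, 0 < E := fun n => by
    rw [hE]; exact Finset.sum_pos (fun i _ => hEn i) ⟨n, Finset.mem_univ n⟩
  have hc0 : 0 ≤ (1 - α) / 2 := by linarith
  have hc1 : (1 - α) / 2 ≤ 1 / 2 := by linarith
  have hO : ∀ n, 0 ≤ lO n := by
    intro n
    have h1 : 0 ≤ En n / E := div_nonneg (hEn n).le (hEpos n).le
    have h2 : En n / E * ((1 - α) / 2) * (LhO - LhP) ≤ 0 :=
      mul_nonpos_of_nonneg_of_nonpos (mul_nonneg h1 hc0) hLO
    have := hlhsum n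
    have := hlhO n
    rw [hlO n, hlP n]
    linarith
  have hP : ∀ n, lhP n / En n + 1 / 2 ≥ LhP / E → 0 ≤ lP n := by
    intro n hyp
    have hEp := hEpos n
    have hEnp := hEn n
    have h1 : En n * (LhP / E - 1 / 2) ≤ En n * (lhP n / En n) :=
      mul_le_mul_of_nonneg_left (by linarith) hEnp.le
    rw [mul_div_cancel₀ _ hEnp.ne'] at h1
    have h1' : En n * LhP / E - En n / 2 ≤ lhP n := by
      have : En n * (LhP / E - 1 / 2) = En n * LhP / E - En n / 2 := by ring
      linarith [this ▸ h1]
    have h2 : En n / E * ((1 - α) / 2) * (LhO - LhP)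
        ≥ En n / E * (1 / 2) * (LhO - LhP) := by
      apply mul_le_mul_of_nonpos_right _ hLO
      exact mul_le_mul_of_nonneg_left hc1 (div_nonneg hEnp.le hEp.le)
    have hsum : LhP + LhO = E := by
      rw [hE, hLhP, hLhO, ← Finset.sum_add_distrib]
      exact Finset.sum_congr rfl (fun n _ => hlhsum n)
    have hLOeq : LhO = E - LhP := by linarith
    have h3 : En n / E * (1 / 2) * (LhO - LhP) = En n / 2 - En n * LhP / E := by
      rw [hLOeq]; field_simp; ring
    rw [hlP n]
    linarith [h3 ▸ h2]
  refine ⟨hO, hP, fun n hyp => ⟨by rw [hlO n]; ring, hP n hyp, hO n⟩⟩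
end

section
/- In the two-period framework with preference factor α = 0, if ℓ is a Nash equilibrium of the hourly-proportional game G^HP_0, then ℓ achieves the minimal feasible system cost: ℓ_P = ℓ_O = E/2 and C(ℓ) = E²/2 = min_{x ∈ L} C(x). -/
/-- First-order condition extracted from a quadratic best-response problem. -/
lemma hp_aux (A B pn qn : ℝ) (hpn : 0 < pn)
    (key : ∀ t : ℝ, 0 < t → t ≤ pn →
      pn * A + qn * B ≤ (pn - t) * (A - t) + (qn + t) * (B + t)) :
    A - B ≤ qn - pn := by
  by_contra h
  push_neg at h
  set G : ℝ := A - B - (qn - pn) with hG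
  have hG0 : 0 < G := by simp [hG]; linarith
  set t : ℝ := min pn (G / 4) with ht
  have ht0 : 0 < t := lt_min hpn (by linarith)
  have htp : t ≤ pn := min_le_left _ _
  have h2 : t ≤ G / 4 := min_le_right _ _
  have hk := key t ht0 htp
  nlinarith [mul_pos ht0 hG0, mul_nonneg ht0.le (by linarith : (0:ℝ) ≤ G / 4 - t)]

/-- In the two-period framework with `α = 0`, any Nash
equilibrium of the hourly-proportional game `G^HP_0` achieves the minimal
feasible system cost: `ℓ_P = ℓ_O = E/2` and `C(ℓ) = E²/2 = min_{x ∈ L} C(x)`. -/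
theorem hp_two_period_NE_optimal_alpha_zero
    (N : ℕ)
    (En : Fin N → ℝ) (hEn : ∀ n, 0 < En n)
    (E : ℝ) (hE : E = ∑ n, En n)
    (f : Fin N → (Fin N → ℝ) → (Fin N → ℝ) → ℝ)
    (hf : ∀ n lP lO, f n lP lO = lP n * (∑ m, lP m) + lO n * (∑ m, lO m))
    (lP lO : Fin N → ℝ)
    (hfeas : ∀ n, lP n + lO n = En n ∧ 0 ≤ lP n ∧ 0 ≤ lO n)
    (hNE : ∀ n xP xO, xP + xO = En n → 0 ≤ xP → 0 ≤ xO →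
      f n lP lO ≤ f n (Function.update lP n xP) (Function.update lO n xO)) :
    (∑ n, lP n) = E / 2 ∧ (∑ n, lO n) = E / 2 ∧
      (∑ n, lP n) ^ 2 + (∑ n, lO n) ^ 2 = E ^ 2 / 2 ∧
      (∀ xP xO : Fin N → ℝ, (∀ n, xP n + xO n = En n ∧ 0 ≤ xP n ∧ 0 ≤ xO n) →
        E ^ 2 / 2 ≤ (∑ n, xP n) ^ 2 + (∑ n, xO n) ^ 2) := by
  set SP : ℝ := ∑ n, lP n with hSP
  set SO : ℝ := ∑ n, lO n with hSO
  -- expanded Nash equilibrium inequality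
  have hupd : ∀ (g : Fin N → ℝ) (n : Fin N) (x : ℝ),
      (∑ m, Function.update g n x m) = (∑ m, g m) - g n + x := by
    intro g n x
    rw [Finset.sum_update_of_mem (Finset.mem_univ n)]
    rw [show (Finset.univ \ {n} : Finset (Fin N)) = Finset.univ.erase n by
      rw [Finset.sdiff_singleton_eq_erase]]
    rw [Finset.sum_erase_eq_sub (Finset.mem_univ n)]
    ring
  have hkey : ∀ (n : Fin N) (x y : ℝ), x + y = En n → 0 ≤ x → 0 ≤ y →
      lP n * SP + lO n * SO ≤ x * (SP - lP n + x) + y * (SO - lO n + y) := by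
    intro n x y hxy hx hy
    have h := hNE n x y hxy hx hy
    rw [hf, hf] at h
    rw [hupd lP n x, hupd lO n y] at h
    simp only [Function.update_self] at h
    linarith
  have L1 : ∀ n, 0 < lP n → SP - SO ≤ lO n - lP n := by
    intro n hp
    refine hp_aux SP SO (lP n) (lO n) hp ?_
    intro t ht0 htp
    have h := hkey n (lP n - t) (lO n + t) (by linarith [(hfeas n).1]) (by linarith)
      (by linarith [(hfeas n).2.2])
    nlinarith [h]
  have L2 : ∀ n, 0 < lO n → SO - SP ≤ lP n - lO n := by
    intro n hq
    refine hp_aux SO SP (lO n) (lP n) hq ?_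
    intro t ht0 htp
    have h := hkey n (lP n + t) (lO n - t) (by linarith [(hfeas n).1])
      (by linarith [(hfeas n).2.1]) (by linarith)
    nlinarith [h]
  have hsum : SP + SO = E := by
    rw [hE, hSP, hSO, ← Finset.sum_add_distrib]
    exact Finset.sum_congr rfl fun n _ => (hfeas n).1
  have hSPnn : 0 ≤ SP := Finset.sum_nonneg fun n _ => (hfeas n).2.1
  have hSOnn : 0 ≤ SO := Finset.sum_nonneg fun n _ => (hfeas n).2.2
  have hdiffP : SO - SP = ∑ n, (lO n - lP n) := by
    rw [Finset.sum_sub_distrib]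
  have hdiffO : SP - SO = ∑ n, (lP n - lO n) := by
    rw [Finset.sum_sub_distrib]
  have hle1 : SP ≤ SO := by
    by_contra h
    push_neg at h
    have hterm : ∀ n, 0 ≤ lO n - lP n := by
      intro n
      rcases eq_or_lt_of_le (hfeas n).2.1 with heq | hlt
      · have := (hfeas n).1
        have := hEn n
        linarith
      · linarith [L1 n hlt]
    have hSP0 : 0 < SP := lt_of_le_of_lt hSOnn h
    have hex : ∃ n, 0 < lP n := by
      by_contra h'
      push_neg at h'
      have : SP ≤ 0 := Finset.sum_nonpos fun n _ => h' n
      linarith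
    obtain ⟨n₀, hn₀⟩ := hex
    have hs : lO n₀ - lP n₀ ≤ ∑ n, (lO n - lP n) :=
      Finset.single_le_sum (fun n _ => hterm n) (Finset.mem_univ n₀)
    have := L1 n₀ hn₀
    rw [← hdiffP] at hs
    linarith
  have hle2 : SO ≤ SP := by
    by_contra h
    push_neg at h
    have hterm : ∀ n, 0 ≤ lP n - lO n := by
      intro n
      rcases eq_or_lt_of_le (hfeas n).2.2 with heq | hlt
      · have := (hfeas n).1
        have := hEn n
        linarith
      · linarith [L2 n hlt]
    have hSO0 : 0 < SO := lt_of_le_of_lt hSPnn h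
    have hex : ∃ n, 0 < lO n := by
      by_contra h'
      push_neg at h'
      have : SO ≤ 0 := Finset.sum_nonpos fun n _ => h' n
      linarith
    obtain ⟨n₀, hn₀⟩ := hex
    have hs : lP n₀ - lO n₀ ≤ ∑ n, (lP n - lO n) :=
      Finset.single_le_sum (fun n _ => hterm n) (Finset.mem_univ n₀)
    have := L2 n₀ hn₀
    rw [← hdiffO] at hs
    linarith
  have heq : SP = SO := le_antisymm hle1 hle2
  have hP : SP = E / 2 := by linarith
  have hO : SO = E / 2 := by linarith
  refine ⟨hP, hO, by rw [hP, hO]; ring, ?_⟩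
  intro xP xO hx
  have hxsum : (∑ n, xP n) + (∑ n, xO n) = E := by
    rw [hE, ← Finset.sum_add_distrib]
    exact Finset.sum_congr rfl fun n _ => (hx n).1
  nlinarith [sq_nonneg ((∑ n, xP n) - (∑ n, xO n))]
end
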